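/- arXiv:2212.05060 — 9 statements merged into one kernel-verified Lean document; each statement's English description precedes it below -/
import Mathlib

section
/- Let X be a real Banach space, let x₀ ∈ X be a unit vector, and suppose X = span{x₀} ⊕_∞ N for some closed subspace N ⊆ X. If x ∈ X is a nonzero vector with dist(x, span{x₀}) < ‖x‖, then the norm of X is Fréchet differentiable at x. -/
/-!
Write `y = g(y) x₀ + n(y)` with `n(y) ∈ N`. The `ℓ∞`-decomposition gives
`‖y‖ = max |g y| ‖n(y)‖`, so `g` is a norm-one functional and `dist(x, span{x₀}) = ‖n(x)‖`.
The hypothesis thus says `‖n(x)‖ < |g x|`, an open condition; near `x` the norm therefore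
agrees with `|g|`, which is differentiable at `x` because `g x ≠ 0`.
-/

open Filter Topology Metric Set NormedSpace MeasureTheory

noncomputable section

/-- The norm of `X` is Fréchet differentiable at `x`: there is a continuous linear
functional `f` with `lim_{y→0} (‖x+y‖ - ‖x‖ - f y)/‖y‖ = 0`. -/
def FrechetSmoothPoint (X : Type*) [NormedAddCommGroup X] [NormedSpace ℝ X] (x : X) : Prop :=
  ∃ f : X →L[ℝ] ℝ,
    Tendsto (fun y : X => (‖x + y‖ - ‖x‖ - f y) / ‖y‖) (𝓝[≠] (0 : X)) (𝓝 0)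

/-- `x` is a smooth point: it is nonzero and there is exactly one norm-one functional
attaining the norm at `x`. -/
def SmoothPoint (X : Type*) [NormedAddCommGroup X] [NormedSpace ℝ X] (x : X) : Prop :=
  x ≠ 0 ∧ ∃! f : StrongDual ℝ X, ‖f‖ = 1 ∧ f x = ‖x‖

/-- `x` is a very smooth point: it is a smooth point whose canonical image in the bidual
is a smooth point of the bidual. -/
def VerySmoothPoint (X : Type*) [NormedAddCommGroup X] [NormedSpace ℝ X] (x : X) : Prop :=
  SmoothPoint X x ∧ SmoothPoint (StrongDual ℝ (StrongDual ℝ X)) (inclusionInDoubleDual ℝ X x)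

/-- `X = M ⊕_∞ N`: `M, N` are closed subspaces with trivial intersection whose sum is
everything, and `‖m + n‖ = max ‖m‖ ‖n‖` for `m ∈ M`, `n ∈ N`. -/
def MSumDecomp {X : Type*} [NormedAddCommGroup X] [NormedSpace ℝ X]
    (M N : Submodule ℝ X) : Prop :=
  IsClosed (M : Set X) ∧ IsClosed (N : Set X) ∧ M ⊓ N = ⊥ ∧ M ⊔ N = ⊤ ∧
    ∀ m ∈ M, ∀ n ∈ N, ‖m + n‖ = max ‖m‖ ‖n‖

/-- `X = M ⊕₁ N`: `M, N` are closed subspaces with trivial intersection whose sum is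
everything, and `‖m + n‖ = ‖m‖ + ‖n‖` for `m ∈ M`, `n ∈ N`; such `M` is an L-summand. -/
def LSumDecomp {X : Type*} [NormedAddCommGroup X] [NormedSpace ℝ X]
    (M N : Submodule ℝ X) : Prop :=
  IsClosed (M : Set X) ∧ IsClosed (N : Set X) ∧ M ⊓ N = ⊥ ∧ M ⊔ N = ⊤ ∧
    ∀ m ∈ M, ∀ n ∈ N, ‖m + n‖ = ‖m‖ + ‖n‖

/-- The state space `S_x` of a vector `x`. -/
def StateSpace {X : Type*} [NormedAddCommGroup X] [NormedSpace ℝ X] (x : X) :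
    Set (StrongDual ℝ X) :=
  {f : StrongDual ℝ X | ‖f‖ ≤ 1 ∧ f x = 1}

/-- `x` is a quasi-polyhedral (QP) point: for some `δ > 0`, every norm-one `z` with
`‖z - x‖ < δ` has `S_z ⊆ S_x`. -/
def QPPoint (X : Type*) [NormedAddCommGroup X] [NormedSpace ℝ X] (x : X) : Prop :=
  ∃ δ > (0 : ℝ), ∀ z : X, ‖z‖ = 1 → ‖z - x‖ < δ → StateSpace z ⊆ StateSpace x

/-- `X` is an `L¹`-predual space: `X*` is isometrically isomorphic to `L¹(μ)` for some
(positive) measure `μ`. -/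
def IsL1Predual (X : Type*) [NormedAddCommGroup X] [NormedSpace ℝ X] : Prop :=
  ∃ (α : Type) (_ : MeasurableSpace α) (μ : Measure α),
    Nonempty (StrongDual ℝ X ≃ₗᵢ[ℝ] Lp ℝ 1 μ)

theorem frechetSmoothPoint_of_hasFDerivAt {X : Type*} [NormedAddCommGroup X] [NormedSpace ℝ X]
    {x : X} {f : StrongDual ℝ X} (h : HasFDerivAt (‖·‖) f x) : FrechetSmoothPoint X x := by
  refine ⟨f, ?_⟩
  have hlo := Asymptotics.isLittleO_norm_right.mpr (hasFDerivAt_iff_isLittleO_nhds_zero.mp h)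
  exact hlo.tendsto_div_nhds_zero.mono_left nhdsWithin_le_nhds

theorem Submodule.exists_linearMap_sub_smul_mem_of_isCompl_span {R M : Type*} [Ring R]
    [IsDomain R] [AddCommGroup M] [Module R M] [Module.IsTorsionFree R M] {x₀ : M}
    (hx₀ : x₀ ≠ 0) {N : Submodule R M} (h : IsCompl (R ∙ x₀) N) :
    ∃ g : M →ₗ[R] R, ∀ y, y - g y • x₀ ∈ N := by
  refine ⟨(LinearEquiv.coord R M x₀ hx₀).toLinearMap ∘ₗ (R ∙ x₀).projectionOnto N h, fun y => ?_⟩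
  have hproj : LinearEquiv.coord R M x₀ hx₀ ((R ∙ x₀).projectionOnto N h y) • x₀ =
      (R ∙ x₀).projection N h y :=
    LinearEquiv.coord_apply_smul R M x₀ hx₀ _
  simpa [hproj] using Submodule.sub_projection_mem h y

namespace MSumDecomp

variable {X : Type*} [NormedAddCommGroup X] [NormedSpace ℝ X] {x₀ : X} {N : Submodule ℝ X}

theorem norm_eq_max (hx₀ : ‖x₀‖ = 1) (hdec : MSumDecomp (ℝ ∙ x₀) N) {a : ℝ} {y : X}
    (hy : y - a • x₀ ∈ N) : ‖y‖ = max |a| ‖y - a • x₀‖ := by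
  have h := hdec.2.2.2.2 (a • x₀) (Submodule.smul_mem _ a (Submodule.mem_span_singleton_self x₀))
    (y - a • x₀) hy
  rwa [add_sub_cancel, norm_smul, hx₀, mul_one, Real.norm_eq_abs] at h

theorem exists_strongDual_sub_smul_mem (hx₀ : ‖x₀‖ = 1) (hdec : MSumDecomp (ℝ ∙ x₀) N) :
    ∃ g : StrongDual ℝ X, ∀ y, y - g y • x₀ ∈ N := by
  have hx₀ne : x₀ ≠ 0 := norm_ne_zero_iff.mp (by rw [hx₀]; exact one_ne_zero)
  obtain ⟨g, hg⟩ := Submodule.exists_linearMap_sub_smul_mem_of_isCompl_span hx₀ne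
    ⟨disjoint_iff.mpr hdec.2.2.1, codisjoint_iff.mpr hdec.2.2.2.1⟩
  have hbound (y : X) : ‖g y‖ ≤ 1 * ‖y‖ := by
    rw [one_mul, norm_eq_max hx₀ hdec (hg y), Real.norm_eq_abs]
    exact le_max_left _ _
  exact ⟨g.mkContinuous 1 hbound, hg⟩

theorem norm_sub_smul_le_infDist (hx₀ : ‖x₀‖ = 1) (hdec : MSumDecomp (ℝ ∙ x₀) N) {a : ℝ}
    {y : X} (hy : y - a • x₀ ∈ N) : ‖y - a • x₀‖ ≤ infDist y (ℝ ∙ x₀ : Submodule ℝ X) := by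
  refine (le_infDist ⟨0, (ℝ ∙ x₀).zero_mem⟩).mpr fun m hm => ?_
  obtain ⟨s, rfl⟩ := Submodule.mem_span_singleton.mp hm
  have hys : y - s • x₀ - (a - s) • x₀ = y - a • x₀ := by rw [sub_smul]; abel
  have h := norm_eq_max hx₀ hdec (y := y - s • x₀) (a := a - s) (by rwa [hys])
  rw [dist_eq_norm, h, hys]
  exact le_max_right _ _

theorem norm_eventuallyEq_abs (hx₀ : ‖x₀‖ = 1) (hdec : MSumDecomp (ℝ ∙ x₀) N)
    {g : StrongDual ℝ X} (hg : ∀ y, y - g y • x₀ ∈ N) {x : X} (hx : ‖x - g x • x₀‖ < |g x|) :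
    (‖·‖) =ᶠ[𝓝 x] fun y => |g y| := by
  have hopen : IsOpen {y : X | ‖y - g y • x₀‖ < |g y|} :=
    isOpen_lt (by fun_prop) (by fun_prop)
  filter_upwards [hopen.mem_nhds hx] with y hy
  rw [norm_eq_max hx₀ hdec (hg y), max_eq_left hy.le]

end MSumDecomp

theorem frechet_smooth_of_MSumDecomp_span_general
    {X : Type*} [NormedAddCommGroup X] [NormedSpace ℝ X]
    (x₀ : X) (hx₀ : ‖x₀‖ = 1) (N : Submodule ℝ X)
    (hdec : MSumDecomp (Submodule.span ℝ {x₀}) N)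
    (x : X)
    (hdist : infDist x ((Submodule.span ℝ {x₀} : Submodule ℝ X) : Set X) < ‖x‖) :
    FrechetSmoothPoint X x := by
  obtain ⟨g, hg⟩ := hdec.exists_strongDual_sub_smul_mem hx₀
  have hnx : ‖x - g x • x₀‖ < |g x| := by
    have h := (hdec.norm_sub_smul_le_infDist hx₀ (hg x)).trans_lt hdist
    rw [hdec.norm_eq_max hx₀ (hg x), lt_max_iff] at h
    exact h.resolve_right (lt_irrefl _)
  have hgx : g x ≠ 0 := abs_pos.mp ((norm_nonneg _).trans_lt hnx)
  exact frechetSmoothPoint_of_hasFDerivAt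
    (((hasDerivAt_abs hgx).comp_hasFDerivAt x g.hasFDerivAt).congr_of_eventuallyEq
      (hdec.norm_eventuallyEq_abs hx₀ hg hnx))

theorem frechet_smooth_of_MSumDecomp_span
    {X : Type*} [NormedAddCommGroup X] [NormedSpace ℝ X] [CompleteSpace X]
    (x₀ : X) (hx₀ : ‖x₀‖ = 1) (N : Submodule ℝ X)
    (hdec : MSumDecomp (Submodule.span ℝ {x₀}) N)
    (x : X) (hx : x ≠ 0)
    (hdist : infDist x ((Submodule.span ℝ {x₀} : Submodule ℝ X) : Set X) < ‖x‖) :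
    FrechetSmoothPoint X x :=
  frechet_smooth_of_MSumDecomp_span_general x₀ hx₀ N hdec x hdist
end
end

section
/- Let X be a real Banach space, let x₀ ∈ X be a unit vector, and suppose X = span{x₀} ⊕_∞ N for some closed subspace N ⊆ X. Let x₀* ∈ X* be the (unique) functional with x₀*(x₀) = 1 and x₀* = 0 on N. Then x₀* strongly exposes x₀: for every sequence (xₙ*) in the closed unit ball of X* with xₙ*(x₀) → 1, one has ‖xₙ* − x₀*‖ → 0. -/
open Filter Topology Metric Set NormedSpace MeasureTheory

noncomputable section

/-! For `f` in the dual unit ball, testing `f` against `n + ‖n‖ • x₀`, whose norm is `‖n‖` because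
the sum is an `ℓ^∞`-sum, gives `|f n| ≤ ‖n‖ (1 - f x₀)` on `N`. Splitting `x = t • x₀ + n` then
yields `‖f - x₀*‖ ≤ 2 (1 - f x₀)`, which tends to `0` along the sequence. -/

section MaxSum

variable {X : Type*} [NormedAddCommGroup X] [NormedSpace ℝ X] {x₀ : X} {N : Submodule ℝ X}
  {f : StrongDual ℝ X}

lemma apply_le_one_of_norm_le_one (hf : ‖f‖ ≤ 1) (hx₀ : ‖x₀‖ = 1) : f x₀ ≤ 1 :=
  calc f x₀ ≤ ‖f x₀‖ := Real.le_norm_self _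
    _ ≤ 1 * ‖x₀‖ := f.le_of_opNorm_le hf x₀
    _ = 1 := by rw [hx₀, one_mul]

lemma apply_le_norm_mul_one_sub_apply (hf : ‖f‖ ≤ 1) (hx₀ : ‖x₀‖ = 1)
    (hmax : ∀ m ∈ Submodule.span ℝ {x₀}, ∀ n ∈ N, ‖m + n‖ = max ‖m‖ ‖n‖)
    {n : X} (hn : n ∈ N) : f n ≤ ‖n‖ * (1 - f x₀) := by
  have hnorm : ‖‖n‖ • x₀ + n‖ = ‖n‖ := by
    rw [hmax _ (Submodule.smul_mem _ _ (Submodule.mem_span_singleton_self x₀)) _ hn,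
      norm_smul, hx₀, mul_one, norm_norm, max_self]
  have hle : f (‖n‖ • x₀ + n) ≤ ‖n‖ :=
    calc f (‖n‖ • x₀ + n) ≤ ‖f (‖n‖ • x₀ + n)‖ := Real.le_norm_self _
      _ ≤ 1 * ‖‖n‖ • x₀ + n‖ := f.le_of_opNorm_le hf _
      _ = ‖n‖ := by rw [one_mul, hnorm]
  rw [map_add, map_smul, smul_eq_mul] at hle
  linarith

lemma abs_apply_le_norm_mul_one_sub_apply (hf : ‖f‖ ≤ 1) (hx₀ : ‖x₀‖ = 1)
    (hmax : ∀ m ∈ Submodule.span ℝ {x₀}, ∀ n ∈ N, ‖m + n‖ = max ‖m‖ ‖n‖)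
    {n : X} (hn : n ∈ N) : |f n| ≤ ‖n‖ * (1 - f x₀) := by
  have hneg := apply_le_norm_mul_one_sub_apply hf hx₀ hmax (N.neg_mem hn)
  rw [map_neg, norm_neg] at hneg
  exact abs_le.mpr ⟨by linarith, apply_le_norm_mul_one_sub_apply hf hx₀ hmax hn⟩

lemma norm_sub_le_two_mul_one_sub_apply (hf : ‖f‖ ≤ 1) (hx₀ : ‖x₀‖ = 1)
    (hmax : ∀ m ∈ Submodule.span ℝ {x₀}, ∀ n ∈ N, ‖m + n‖ = max ‖m‖ ‖n‖)
    (hsup : Submodule.span ℝ {x₀} ⊔ N = ⊤)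
    {x₀star : StrongDual ℝ X} (hval : x₀star x₀ = 1) (hker : ∀ n ∈ N, x₀star n = 0) :
    ‖f - x₀star‖ ≤ 2 * (1 - f x₀) := by
  have hε : 0 ≤ 1 - f x₀ := sub_nonneg.mpr (apply_le_one_of_norm_le_one hf hx₀)
  refine ContinuousLinearMap.opNorm_le_bound _ (by linarith) fun x => ?_
  obtain ⟨m, hm, n, hn, rfl⟩ := Submodule.mem_sup.mp (hsup ▸ Submodule.mem_top : x ∈ _)
  obtain ⟨t, rfl⟩ := Submodule.mem_span_singleton.mp hm
  have hnorm : ‖t • x₀ + n‖ = max |t| ‖n‖ := by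
    rw [hmax _ hm _ hn, norm_smul, hx₀, mul_one, Real.norm_eq_abs]
  have happly : (f - x₀star) (t • x₀ + n) = -(t * (1 - f x₀)) + f n := by
    simp only [sub_apply, map_add, map_smul, hval, hker n hn, smul_eq_mul]
    ring
  calc ‖(f - x₀star) (t • x₀ + n)‖ ≤ |t * (1 - f x₀)| + |f n| := by
        rw [happly, Real.norm_eq_abs, ← abs_neg (t * _)]
        exact abs_add_le _ _
    _ ≤ |t| * (1 - f x₀) + ‖n‖ * (1 - f x₀) := by
        rw [abs_mul, abs_of_nonneg hε]
        gcongr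
        exact abs_apply_le_norm_mul_one_sub_apply hf hx₀ hmax hn
    _ ≤ 2 * (1 - f x₀) * ‖t • x₀ + n‖ := by
        rw [hnorm]
        nlinarith [le_max_left |t| ‖n‖, le_max_right |t| ‖n‖]

end MaxSum

theorem strongly_exposes_of_MSumDecomp_span_general
    {X : Type*} [NormedAddCommGroup X] [NormedSpace ℝ X]
    (x₀ : X) (hx₀ : ‖x₀‖ = 1) (N : Submodule ℝ X)
    (hdec : MSumDecomp (Submodule.span ℝ {x₀}) N)
    (x₀star : StrongDual ℝ X) (hval : x₀star x₀ = 1) (hker : ∀ n ∈ N, x₀star n = 0)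
    (g : ℕ → StrongDual ℝ X) (hg : ∀ n, ‖g n‖ ≤ 1)
    (hconv : Tendsto (fun n => g n x₀) atTop (𝓝 1)) :
    Tendsto (fun n => ‖g n - x₀star‖) atTop (𝓝 0) := by
  obtain ⟨-, -, -, hsup, hmax⟩ := hdec
  have hbound : Tendsto (fun n => 2 * (1 - g n x₀)) atTop (𝓝 0) := by
    simpa using ((tendsto_const_nhds (x := (1 : ℝ))).sub hconv).const_mul (2 : ℝ)
  exact squeeze_zero (fun n => norm_nonneg _)
    (fun n => norm_sub_le_two_mul_one_sub_apply (hg n) hx₀ hmax hsup hval hker) hbound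

theorem strongly_exposes_of_MSumDecomp_span
    {X : Type*} [NormedAddCommGroup X] [NormedSpace ℝ X] [CompleteSpace X]
    (x₀ : X) (hx₀ : ‖x₀‖ = 1) (N : Submodule ℝ X)
    (hdec : MSumDecomp (Submodule.span ℝ {x₀}) N)
    (x₀star : StrongDual ℝ X) (hval : x₀star x₀ = 1) (hker : ∀ n ∈ N, x₀star n = 0)
    (g : ℕ → StrongDual ℝ X) (hg : ∀ n, ‖g n‖ ≤ 1)
    (hconv : Tendsto (fun n => g n x₀) atTop (𝓝 1)) :
    Tendsto (fun n => ‖g n - x₀star‖) atTop (𝓝 0) :=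
  strongly_exposes_of_MSumDecomp_span_general x₀ hx₀ N hdec x₀star hval hker g hg hconv
end
end

section
/- Let K be a compact Hausdorff space with an isolated point k₀, and let f ∈ C(K) be a nonzero function such that |f(k)| < ‖f‖_∞ for every k ≠ k₀ (i.e., f attains its maximum modulus only at k₀). Then the supremum norm of C(K) is Fréchet differentiable at f. -/
open Filter Topology Metric Set NormedSpace MeasureTheory

noncomputable section

/-!
Since `k₀` is isolated, `K \ {k₀}` is compact, so `|f|` stays below some `m < ‖f‖` off `k₀`.
A perturbation `f + y` with `2‖y‖ < ‖f‖ - m` still attains its norm at `k₀` and keeps the sign of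
`f k₀` there, so near `f` the norm is the affine map `g ↦ sign (f k₀) * g k₀`; an affine norm is
Fréchet differentiable.
-/

theorem frechetSmoothPoint_of_eventually_norm_add_eq {X : Type*} [NormedAddCommGroup X]
    [NormedSpace ℝ X] {x : X} (φ : X →L[ℝ] ℝ) (h : ∀ᶠ y in 𝓝 0, ‖x + y‖ = ‖x‖ + φ y) :
    FrechetSmoothPoint X x := by
  refine ⟨φ, tendsto_const_nhds.congr' ?_⟩
  filter_upwards [nhdsWithin_le_nhds h] with y hy
  simp [hy]

theorem abs_add_eq_abs_add_sign_mul {a b : ℝ} (h : |b| ≤ |a|) :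
    |a + b| = |a| + SignType.sign a * b := by
  rcases lt_trichotomy a 0 with ha | rfl | ha
  · rw [abs_le] at h
    rw [_root_.sign_neg ha, abs_of_neg ha, abs_of_nonpos (by linarith [abs_of_neg ha])]
    simp only [SignType.coe_neg_one]
    ring
  · simp_all
  · rw [abs_le] at h
    rw [_root_.sign_pos ha, abs_of_pos ha, abs_of_nonneg (by linarith [abs_of_pos ha])]
    simp only [SignType.coe_one]
    ring

namespace ContinuousMap

variable {K : Type*} [TopologicalSpace K] [CompactSpace K]

theorem norm_le_max_abs_apply (g : C(K, ℝ)) {k₀ : K} {m : ℝ} (h : ∀ k ≠ k₀, |g k| ≤ m) :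
    ‖g‖ ≤ max m |g k₀| := by
  refine (g.norm_le (le_max_of_le_right (abs_nonneg _))).2 fun k => ?_
  rw [Real.norm_eq_abs]
  by_cases hk : k = k₀
  · exact hk ▸ le_max_right _ _
  · exact le_max_of_le_left (h k hk)

theorem abs_apply_le_norm (g : C(K, ℝ)) (k : K) : |g k| ≤ ‖g‖ :=
  g.norm_coe_le_norm k

theorem norm_add_eq_norm_add_sign_mul {f y : C(K, ℝ)} {k₀ : K} {m : ℝ} (hm₀ : 0 ≤ m)
    (hm : ∀ k ≠ k₀, |f k| ≤ m) (hy : 2 * ‖y‖ < ‖f‖ - m) :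
    ‖f + y‖ = ‖f‖ + SignType.sign (f k₀) * y k₀ := by
  have hy₀ := norm_nonneg y
  have hf : ‖f‖ = |f k₀| := le_antisymm
    ((le_max_iff.1 (f.norm_le_max_abs_apply hm)).resolve_left (by intro h; linarith))
    (f.abs_apply_le_norm k₀)
  have hyk₀ := y.abs_apply_le_norm k₀
  have hpeak : m + ‖y‖ ≤ |f k₀ + y k₀| := by
    linarith [abs_sub_abs_le_abs_add (f k₀) (y k₀)]
  rw [hf, ← abs_add_eq_abs_add_sign_mul (by linarith)]
  refine le_antisymm ?_ ((f + y).abs_apply_le_norm k₀)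
  refine ((f + y).norm_le_max_abs_apply (m := m + ‖y‖) fun k hk => ?_).trans (max_le hpeak le_rfl)
  exact (abs_add_le _ _).trans (add_le_add (hm k hk) (y.abs_apply_le_norm k))

end ContinuousMap

theorem exists_nonneg_lt_norm_forall_abs_le {K : Type*} [TopologicalSpace K] [CompactSpace K]
    {k₀ : K} (hk₀ : IsOpen ({k₀} : Set K)) {f : C(K, ℝ)} (hf : f ≠ 0)
    (hmax : ∀ k : K, k ≠ k₀ → |f k| < ‖f‖) :
    ∃ m, 0 ≤ m ∧ m < ‖f‖ ∧ ∀ k ≠ k₀, |f k| ≤ m := by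
  obtain ⟨δ, hδ, hgap⟩ := hk₀.isClosed_compl.isCompact.exists_forall_le'
    (f := fun k => ‖f‖ - |f k|) (by fun_prop) (a := 0) fun k hk => sub_pos.2 (hmax k hk)
  refine ⟨max 0 (‖f‖ - δ), le_max_left _ _, max_lt (norm_pos_iff.2 hf) (by linarith), ?_⟩
  exact fun k hk => le_max_of_le_right (by linarith [hgap k hk])

theorem frechet_smooth_of_attains_only_at_isolated_point_general
    {K : Type*} [TopologicalSpace K] [CompactSpace K]
    (k₀ : K) (hk₀ : IsOpen ({k₀} : Set K))
    (f : C(K, ℝ)) (hf : f ≠ 0)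
    (hmax : ∀ k : K, k ≠ k₀ → |f k| < ‖f‖) :
    FrechetSmoothPoint C(K, ℝ) f := by
  obtain ⟨m, hm₀, hmf, hm⟩ := exists_nonneg_lt_norm_forall_abs_le hk₀ hf hmax
  refine frechetSmoothPoint_of_eventually_norm_add_eq
    ((SignType.sign (f k₀) : ℝ) • ContinuousMap.evalCLM ℝ k₀) ?_
  filter_upwards [ball_mem_nhds (0 : C(K, ℝ)) (half_pos (sub_pos.2 hmf))] with y hy
  rw [mem_ball_zero_iff] at hy
  rw [ContinuousMap.norm_add_eq_norm_add_sign_mul hm₀ hm (by linarith)]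
  simp

theorem frechet_smooth_of_attains_only_at_isolated_point
    {K : Type*} [TopologicalSpace K] [CompactSpace K] [T2Space K]
    (k₀ : K) (hk₀ : IsOpen ({k₀} : Set K))
    (f : C(K, ℝ)) (hf : f ≠ 0)
    (hmax : ∀ k : K, k ≠ k₀ → |f k| < ‖f‖) :
    FrechetSmoothPoint C(K, ℝ) f :=
  frechet_smooth_of_attains_only_at_isolated_point_general k₀ hk₀ f hf hmax
end
end

section
/- Let X be a real Banach space such that for every extreme point x* of the closed unit ball of X*, the one-dimensional subspace span{x*} is an L-summand of X*, i.e., X* = span{x*} ⊕₁ N for some closed subspace N. Then every very smooth point of X is a Fréchet smooth point of X. -/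
open Filter Topology Metric Set NormedSpace MeasureTheory

noncomputable section

/-! The norming functional `f` of a smooth point `x` is an exposed, hence extreme, point of the
dual ball, so `X* = span{f} ⊕₁ N`. Very smoothness forces `x` to be normed strictly less on `N`
than on `f`: otherwise a norming functional of `x|_N`, composed with restriction to `N`, would be a
norming functional of `x` in `X***` other than `f`, since it kills the coordinate functional of `f`.
Writing a norming functional of `x + y` as `t • f + n`, this gap gives `‖g - f‖ = O(‖y‖)`,
which makes the norm Fréchet differentiable at `x` (Šmulian). -/

section

variable {E : Type*} [NormedAddCommGroup E] [NormedSpace ℝ E]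

theorem norm_eq_one_of_norming {x : E} (hx : x ≠ 0) {g : StrongDual ℝ E} (hg : ‖g‖ ≤ 1)
    (hgx : g x = ‖x‖) : ‖g‖ = 1 := by
  refine hg.antisymm (le_of_mul_le_mul_right ?_ (norm_pos_iff.mpr hx))
  simpa [← hgx, Real.norm_eq_abs] using (le_abs_self (g x)).trans (g.le_opNorm x)

theorem SmoothPoint.eq_of_norming {x : E} (hx : SmoothPoint E x) {g₁ g₂ : StrongDual ℝ E}
    (hg₁ : ‖g₁‖ ≤ 1) (hg₁x : g₁ x = ‖x‖) (hg₂ : ‖g₂‖ ≤ 1) (hg₂x : g₂ x = ‖x‖) : g₁ = g₂ :=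
  hx.2.unique ⟨norm_eq_one_of_norming hx.1 hg₁ hg₁x, hg₁x⟩
    ⟨norm_eq_one_of_norming hx.1 hg₂ hg₂x, hg₂x⟩

theorem apply_le_norm_of_norm_le_one {g : StrongDual ℝ E} (hg : ‖g‖ ≤ 1) (x : E) : g x ≤ ‖x‖ :=
  (le_abs_self _).trans ((g.le_opNorm x).trans (mul_le_of_le_one_left (norm_nonneg x) hg))

theorem SmoothPoint.mem_exposedPoints {x : E} (hx : SmoothPoint E x) {f : StrongDual ℝ E}
    (hf : ‖f‖ ≤ 1) (hfx : f x = ‖x‖) :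
    f ∈ (closedBall (0 : StrongDual ℝ E) 1).exposedPoints ℝ := by
  refine ⟨mem_closedBall_zero_iff.mpr hf, inclusionInDoubleDual ℝ E x, fun g hg => ?_⟩
  have hg : ‖g‖ ≤ 1 := mem_closedBall_zero_iff.mp hg
  have hgx := apply_le_norm_of_norm_le_one hg x
  simp only [dual_def, hfx]
  exact ⟨hgx, fun h => hx.eq_of_norming hg (hgx.antisymm h) hf hfx⟩

theorem LSumDecomp.exists_coord {f : E} (hf : f ≠ 0) {N : Submodule ℝ E}
    (h : LSumDecomp (Submodule.span ℝ {f}) N) :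
    ∃ G : StrongDual ℝ E, G f = 1 ∧ (∀ n ∈ N, G n = 0) ∧ ∀ g, g - G g • f ∈ N := by
  obtain ⟨-, -, hinf, hsup, hadd⟩ := h
  have hc : IsCompl (Submodule.span ℝ {f}) N := ⟨disjoint_iff.mpr hinf, codisjoint_iff.mpr hsup⟩
  let G : E →ₗ[ℝ] ℝ := (LinearEquiv.coord ℝ E f hf).toLinearMap ∘ₗ
    Submodule.projectionOnto _ N hc
  have hmem : ∀ g, g - G g • f ∈ N := fun g => by
    rw [show G g • f = _ from LinearEquiv.coord_apply_smul ℝ E f hf _]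
    exact Submodule.sub_projection_mem hc g
  have hbound : ∀ g, ‖G g‖ ≤ ‖f‖⁻¹ * ‖g‖ := fun g => by
    rw [le_inv_mul_iff₀ (norm_pos_iff.mpr hf), mul_comm, ← norm_smul]
    calc ‖G g • f‖ ≤ ‖G g • f‖ + ‖g - G g • f‖ := le_add_of_nonneg_right (norm_nonneg _)
      _ = ‖g‖ := by
        rw [← hadd _ (Submodule.smul_mem _ _ (Submodule.mem_span_singleton_self f)) _ (hmem g),
          add_sub_cancel]
  refine ⟨G.mkContinuous _ hbound, ?_, fun n hn => ?_, hmem⟩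
  · simp [G, Submodule.projectionOnto_apply_of_mem_left hc (Submodule.mem_span_singleton_self f),
      LinearEquiv.coord_self]
  · simp [G, Submodule.projectionOnto_apply_of_mem_right hc hn]

theorem SmoothPoint.exists_bound_lt_norm_on_ker {φ : StrongDual ℝ E}
    (hφ : SmoothPoint (StrongDual ℝ E) φ) {e : E} (he : ‖e‖ ≤ 1) (heφ : φ e = ‖φ‖)
    {G : StrongDual ℝ E} (hGe : G e ≠ 0) :
    ∃ r, 0 ≤ r ∧ r < ‖φ‖ ∧ ∀ n, G n = 0 → φ n ≤ r * ‖n‖ := by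
  let K : Submodule ℝ E := LinearMap.ker (G : E →ₗ[ℝ] ℝ)
  refine ⟨‖φ.comp K.subtypeL‖, ContinuousLinearMap.opNorm_nonneg _, ?_, fun n hn =>
    (le_abs_self _).trans ((φ.comp K.subtypeL).le_opNorm ⟨n, hn⟩)⟩
  have hle : ‖φ.comp K.subtypeL‖ ≤ ‖φ‖ :=
    (φ.opNorm_comp_le _).trans (mul_le_of_le_one_right (norm_nonneg φ) K.norm_subtypeL_le)
  refine hle.lt_of_ne fun heq => hGe ?_
  -- Compose a norming functional of `φ|_K` with restriction to `K`: it norms `φ` but kills `G`.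
  obtain ⟨ψ, hψ, hψφ⟩ := exists_dual_vector'' ℝ (φ.comp K.subtypeL)
  let F : StrongDual ℝ (StrongDual ℝ E) :=
    ψ.comp ((ContinuousLinearMap.compL ℝ K E ℝ).flip K.subtypeL)
  have hF : ‖F‖ ≤ 1 := by
    refine ContinuousLinearMap.opNorm_le_bound _ zero_le_one fun χ => ?_
    calc ‖F χ‖ ≤ ‖ψ‖ * ‖χ.comp K.subtypeL‖ := ψ.le_opNorm _
      _ ≤ 1 * (‖χ‖ * 1) := by
        gcongr
        exact (χ.opNorm_comp_le _).trans (by gcongr; exact K.norm_subtypeL_le)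
      _ = 1 * ‖χ‖ := by ring
  have hFe : F = inclusionInDoubleDual ℝ E e :=
    hφ.eq_of_norming hF (by simpa [F, heq] using hψφ) ((double_dual_bound ℝ E e).trans he) heφ
  have hGK : G.comp K.subtypeL = 0 := by ext n; exact n.2
  simpa [F, hGK] using (congrArg (· G) hFe).symm

theorem frechetSmoothPoint_of_norm_sub_le {x : E} {f : StrongDual ℝ E} (hf : ‖f‖ ≤ 1)
    (hfx : f x = ‖x‖) (C : ℝ)
    (hC : ∀ y (g : StrongDual ℝ E), ‖g‖ ≤ 1 → g (x + y) = ‖x + y‖ → ‖g - f‖ ≤ C * ‖y‖) :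
    FrechetSmoothPoint E x := by
  refine ⟨f, squeeze_zero_norm' (a := fun y => C * ‖y‖) ?_ ?_⟩
  · filter_upwards [self_mem_nhdsWithin] with y (hy : y ≠ 0)
    obtain ⟨g, hg, hgxy⟩ := exists_dual_vector'' ℝ (x + y)
    replace hgxy : g (x + y) = ‖x + y‖ := by simpa using hgxy
    have hlower : 0 ≤ ‖x + y‖ - ‖x‖ - f y := by
      linarith [apply_le_norm_of_norm_le_one hf (x + y), map_add f x y]
    have hupper : ‖x + y‖ - ‖x‖ - f y ≤ ‖g - f‖ * ‖y‖ := by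
      have := (le_abs_self _).trans ((g - f).le_opNorm y)
      rw [sub_apply] at this
      rw [map_add] at hgxy
      linarith [apply_le_norm_of_norm_le_one hg x]
    rw [norm_div, norm_norm, Real.norm_of_nonneg hlower, div_le_iff₀ (norm_pos_iff.mpr hy)]
    exact hupper.trans (mul_le_mul_of_nonneg_right (hC y g hg hgxy) (norm_nonneg y))
  · have : Tendsto (fun y : E => C * ‖y‖) (𝓝 0) (𝓝 (C * ‖(0 : E)‖)) :=
      (continuous_const.mul continuous_norm).tendsto 0
    simpa using this.mono_left nhdsWithin_le_nhds

theorem LSumDecomp.norm_sub_le_of_norming {x y : E} {f g : StrongDual ℝ E}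
    {N : Submodule ℝ (StrongDual ℝ E)} (hN : LSumDecomp (Submodule.span ℝ {f}) N)
    (hf : ‖f‖ = 1) (hfx : f x = ‖x‖) {r : ℝ} (hr0 : 0 ≤ r) (hr : ∀ n ∈ N, n x ≤ r * ‖n‖)
    (hg : ‖g‖ ≤ 1) (hgxy : g (x + y) = ‖x + y‖) {t : ℝ} (ht : g - t • f ∈ N) :
    (‖x‖ - r) * ‖g - f‖ ≤ 4 * ‖y‖ := by
  have hadd := hN.2.2.2.2
  have hspan : ∀ s : ℝ, s • f ∈ Submodule.span ℝ {f} := fun s =>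
    Submodule.smul_mem _ _ (Submodule.mem_span_singleton_self f)
  set n := g - t • f
  have hg_split : ‖g‖ = |t| + ‖n‖ := by
    rw [← add_sub_cancel (t • f) g, hadd _ (hspan t) _ ht, norm_smul, hf, mul_one,
      Real.norm_eq_abs]
  have hgf_split : ‖g - f‖ = 1 - t + ‖n‖ := by
    rw [show g - f = (t - 1) • f + n by simp only [n]; module,
      hadd _ (hspan _) _ ht, norm_smul, hf, mul_one, Real.norm_eq_abs,
      abs_of_nonpos (by linarith [le_abs_self t, norm_nonneg n])]
    ring
  have hgx : ‖x‖ - 2 * ‖y‖ ≤ g x := by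
    have hgy := apply_le_norm_of_norm_le_one hg y
    have hxy := norm_sub_le (x + y) y
    rw [add_sub_cancel_right] at hxy
    linarith [map_add g x y]
  have hgx_split : g x = t * ‖x‖ + n x := by
    simp [n, hfx]
  have hnx := hr n ht
  rw [hgf_split]
  -- With `a = ‖x‖` this combines `‖n‖ (a - r) ≤ 2‖y‖` and `a (1 - t) ≤ 2‖y‖ + r ‖n‖`.
  nlinarith [mul_nonneg hr0 (show 0 ≤ 1 - t - ‖n‖ by linarith [le_abs_self t]),
    mul_le_mul_of_nonneg_right (show t ≤ 1 - ‖n‖ by linarith [le_abs_self t]) (norm_nonneg x)]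

end

theorem frechet_smooth_of_very_smooth_of_extreme_L_summands_general
    {X : Type*} [NormedAddCommGroup X] [NormedSpace ℝ X]
    (hL : ∀ f ∈ Set.extremePoints ℝ (closedBall (0 : StrongDual ℝ X) 1),
      ∃ N : Submodule ℝ (StrongDual ℝ X), LSumDecomp (Submodule.span ℝ {f}) N)
    (x : X) (hx : VerySmoothPoint X x) :
    FrechetSmoothPoint X x := by
  obtain ⟨-, f, ⟨hf1, hfx⟩, -⟩ := hx.1
  obtain ⟨N, hN⟩ := hL f (exposedPoints_subset_extremePoints (hx.1.mem_exposedPoints hf1.le hfx))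
  obtain ⟨G, hGf, hGN, hG⟩ := hN.exists_coord (ne_zero_of_norm_ne_zero (hf1 ▸ one_ne_zero))
  have hxhat : ‖inclusionInDoubleDual ℝ X x‖ = ‖x‖ := (inclusionInDoubleDualLi ℝ).norm_map x
  obtain ⟨r, hr0, hr, hrN⟩ := hx.2.exists_bound_lt_norm_on_ker hf1.le (by simp [hxhat, hfx])
    (G := G) (by simp [hGf])
  rw [hxhat] at hr
  refine frechetSmoothPoint_of_norm_sub_le hf1.le hfx (4 / (‖x‖ - r)) fun y g hg hgxy => ?_
  rw [div_mul_eq_mul_div, le_div_iff₀ (sub_pos.mpr hr), mul_comm]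
  exact hN.norm_sub_le_of_norming hf1 hfx hr0 (fun n hn => hrN n (hGN n hn)) hg
    hgxy (hG g)

theorem frechet_smooth_of_very_smooth_of_extreme_L_summands
    {X : Type*} [NormedAddCommGroup X] [NormedSpace ℝ X] [CompleteSpace X]
    (hL : ∀ f ∈ Set.extremePoints ℝ (closedBall (0 : StrongDual ℝ X) 1),
      ∃ N : Submodule ℝ (StrongDual ℝ X), LSumDecomp (Submodule.span ℝ {f}) N)
    (x : X) (hx : VerySmoothPoint X x) :
    FrechetSmoothPoint X x :=
  frechet_smooth_of_very_smooth_of_extreme_L_summands_general hL x hx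
end
end

section
/- Let X be a real Banach space such that for every extreme point x* of the closed unit ball of X*, span{x*} is an L-summand of X*. Then for any two extreme points x₁*, x₂* of the closed unit ball of X* with x₁* ≠ x₂* and x₁* ≠ −x₂*, one has ‖x₁* − x₂*‖ = 2; in particular the set of extreme points of the closed unit ball of X* is norm-discrete. -/
open Filter Topology Metric Set NormedSpace MeasureTheory

noncomputable section

/-! In an L-decomposition `M ⊕₁ N` every extreme point `g` of the unit ball lies in `M` or in `N`:
writing `g = m + n` with `‖m‖ + ‖n‖ = 1`, `g` lies on the open segment between `m / ‖m‖` and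
`n / ‖n‖`. If `span {f}` is an L-summand and `g ≠ ±f` is extreme, `g` cannot lie in `span {f}`,
so it lies in the complement and `‖f - g‖ = ‖f‖ + ‖g‖ = 2`. -/

section ExtremePoints

variable {E : Type*} [NormedAddCommGroup E] [NormedSpace ℝ E]

lemma norm_eq_one_of_mem_extremePoints_closedBall [Nontrivial E] {f : E}
    (hf : f ∈ extremePoints ℝ (closedBall 0 1)) : ‖f‖ = 1 := by
  simpa using extremePoints_closedBall_subset_sphere hf

lemma eq_or_eq_neg_of_mem_span_singleton {f g : E} (hf : ‖f‖ = 1) (hg : ‖g‖ = 1)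
    (h : g ∈ Submodule.span ℝ {f}) : g = f ∨ g = -f := by
  obtain ⟨c, rfl⟩ := Submodule.mem_span_singleton.1 h
  rw [norm_smul, hf, mul_one, Real.norm_eq_abs] at hg
  rcases (abs_eq zero_le_one).1 hg with rfl | rfl <;> simp

lemma LSumDecomp.mem_or_mem_of_mem_extremePoints [Nontrivial E] {M N : Submodule ℝ E}
    (h : LSumDecomp M N) {g : E} (hg : g ∈ extremePoints ℝ (closedBall 0 1)) :
    g ∈ M ∨ g ∈ N := by
  obtain ⟨-, -, -, hsup, hnorm⟩ := h
  obtain ⟨m, hm, n, hn, rfl⟩ :=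
    Submodule.mem_sup.1 (hsup ▸ Submodule.mem_top : g ∈ M ⊔ N)
  rcases eq_or_ne m 0 with rfl | hm0
  · simpa using Or.inr hn
  rcases eq_or_ne n 0 with rfl | hn0
  · simpa using Or.inl hm
  have hseg : m + n ∈ openSegment ℝ (‖m‖⁻¹ • m) (‖n‖⁻¹ • n) :=
    ⟨‖m‖, ‖n‖, norm_pos_iff.2 hm0, norm_pos_iff.2 hn0,
      by rw [← hnorm m hm n hn, norm_eq_one_of_mem_extremePoints_closedBall hg],
      by simp [smul_smul, hm0, hn0]⟩
  left
  rw [← hg.2 (inv_norm_smul_mem_unitClosedBall m) (inv_norm_smul_mem_unitClosedBall n) hseg]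
  exact M.smul_mem _ hm

lemma norm_sub_eq_two_of_lSumDecomp_span_singleton {f g : E} {N : Submodule ℝ E}
    (hN : LSumDecomp (Submodule.span ℝ {f}) N) (hf : f ∈ extremePoints ℝ (closedBall 0 1))
    (hg : g ∈ extremePoints ℝ (closedBall 0 1)) (hfg : f ≠ g) (hfg' : f ≠ -g) :
    ‖f - g‖ = 2 := by
  have := nontrivial_of_ne f g hfg
  have hf1 := norm_eq_one_of_mem_extremePoints_closedBall hf
  have hg1 := norm_eq_one_of_mem_extremePoints_closedBall hg
  rcases hN.mem_or_mem_of_mem_extremePoints hg with hgf | hgN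
  · rcases eq_or_eq_neg_of_mem_span_singleton hf1 hg1 hgf with rfl | rfl
    exacts [absurd rfl hfg, absurd (neg_neg f).symm hfg']
  · calc ‖f - g‖ = ‖f‖ + ‖-g‖ := by
          rw [sub_eq_add_neg]
          exact hN.2.2.2.2 f (Submodule.mem_span_singleton_self f) (-g) (N.neg_mem hgN)
      _ = 2 := by rw [norm_neg, hf1, hg1]; norm_num

end ExtremePoints

theorem extreme_points_norm_discrete_of_L_summands_general
    {X : Type*} [NormedAddCommGroup X] [NormedSpace ℝ X]
    (hL : ∀ f ∈ Set.extremePoints ℝ (closedBall (0 : StrongDual ℝ X) 1),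
      ∃ N : Submodule ℝ (StrongDual ℝ X), LSumDecomp (Submodule.span ℝ {f}) N) :
    (∀ f ∈ Set.extremePoints ℝ (closedBall (0 : StrongDual ℝ X) 1),
      ∀ g ∈ Set.extremePoints ℝ (closedBall (0 : StrongDual ℝ X) 1),
        f ≠ g → f ≠ -g → ‖f - g‖ = 2) ∧
    ∀ f ∈ Set.extremePoints ℝ (closedBall (0 : StrongDual ℝ X) 1),
      ∃ ε > (0 : ℝ), ∀ g ∈ Set.extremePoints ℝ (closedBall (0 : StrongDual ℝ X) 1),
        g ≠ f → ε ≤ ‖f - g‖ := by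
  have hdist : ∀ f ∈ extremePoints ℝ (closedBall (0 : StrongDual ℝ X) 1),
      ∀ g ∈ extremePoints ℝ (closedBall (0 : StrongDual ℝ X) 1),
        f ≠ g → f ≠ -g → ‖f - g‖ = 2 := fun f hf g hg hfg hfg' ↦
    (hL f hf).elim fun _ hN ↦ norm_sub_eq_two_of_lSumDecomp_span_singleton hN hf hg hfg hfg'
  refine ⟨hdist, fun f hf ↦ ⟨2, two_pos, fun g hg hgf ↦ ?_⟩⟩
  by_cases hfg' : f = -g
  · have := nontrivial_of_ne g f hgf
    subst hfg'
    rw [← neg_add', norm_neg, ← two_smul ℝ g, norm_smul,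
      norm_eq_one_of_mem_extremePoints_closedBall hg]
    norm_num
  · exact (hdist f hf g hg hgf.symm hfg').ge

theorem extreme_points_norm_discrete_of_L_summands
    {X : Type*} [NormedAddCommGroup X] [NormedSpace ℝ X] [CompleteSpace X]
    (hL : ∀ f ∈ Set.extremePoints ℝ (closedBall (0 : StrongDual ℝ X) 1),
      ∃ N : Submodule ℝ (StrongDual ℝ X), LSumDecomp (Submodule.span ℝ {f}) N) :
    (∀ f ∈ Set.extremePoints ℝ (closedBall (0 : StrongDual ℝ X) 1),
      ∀ g ∈ Set.extremePoints ℝ (closedBall (0 : StrongDual ℝ X) 1),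
        f ≠ g → f ≠ -g → ‖f - g‖ = 2) ∧
    ∀ f ∈ Set.extremePoints ℝ (closedBall (0 : StrongDual ℝ X) 1),
      ∃ ε > (0 : ℝ), ∀ g ∈ Set.extremePoints ℝ (closedBall (0 : StrongDual ℝ X) 1),
        g ≠ f → ε ≤ ‖f - g‖ :=
  extreme_points_norm_discrete_of_L_summands_general hL
end
end

section
/- Let Ω be a compact Hausdorff space and X a real Banach space such that every very smooth point of X is a Fréchet smooth point of X. Then every very smooth point of C(Ω, X) is a Fréchet smooth point of C(Ω, X). -/
open Filter Topology Metric Set NormedSpace MeasureTheory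

noncomputable section

/-
Let `f` be very smooth in `C(Ω, X)` and `‖f ω₀‖ = ‖f‖`. If also `‖f ω₁‖ = ‖f‖`, the functionals
`y ∘ δ_ω₀` and `y₁ ∘ δ_ω₁` both norm `f`, so by smoothness they agree; a bump function separates
them unless `ω₁ = ω₀`. If `ω₀` were not isolated, a weak* limit `Λ ∈ C(Ω, X)***` of `y ∘ δ_ω` as
`ω → ω₀` and `y ∘ δ_ω₀` itself would both norm `f` in the bidual, yet a bidual element playing
the role of `f • 𝟙_{Ω \ {ω₀}}` separates them. By compactness `‖f ω‖` then stays below `‖f‖ - ε`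
off `ω₀`, so near `f` the norm of `C(Ω, X)` is `g ↦ ‖g ω₀‖`. Finally `f ω₀` is very smooth in
`X`, being the image of `f` under the norm-one evaluation `δ_ω₀`, which has the constants as a
right inverse, so smoothness passes to the (double) duals. The hypothesis on `X` makes the norm
differentiable at `f ω₀`, hence at `f`.
-/

section Normed

variable {E F : Type*} [NormedAddCommGroup E] [NormedSpace ℝ E] [NormedAddCommGroup F]
  [NormedSpace ℝ F]

theorem frechetSmoothPoint_iff_differentiableAt (x : E) :
    FrechetSmoothPoint E x ↔ DifferentiableAt ℝ (‖·‖) x := by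
  have key : ∀ φ : E →L[ℝ] ℝ, HasFDerivAt (‖·‖) φ x ↔
      Tendsto (fun y : E => (‖x + y‖ - ‖x‖ - φ y) / ‖y‖) (𝓝[≠] 0) (𝓝 0) := by
    intro φ
    rw [hasFDerivAt_iff_isLittleO_nhds_zero, ← Asymptotics.isLittleO_norm_right,
      Asymptotics.isLittleO_iff_tendsto' (Eventually.of_forall fun y hy => by simp_all),
      ← nhdsNE_sup_pure, tendsto_sup, and_iff_left]
    exact tendsto_pure_left.2 fun s hs => by simpa using mem_of_mem_nhds hs
  simp only [FrechetSmoothPoint, ← key]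
  rfl

theorem norm_inclusionInDoubleDual (x : E) : ‖inclusionInDoubleDual ℝ E x‖ = ‖x‖ :=
  (inclusionInDoubleDualLi ℝ).norm_map x

theorem StrongDual.norm_eq_one_of_apply_eq_norm {x : E} (hx : x ≠ 0) {φ : StrongDual ℝ E}
    (hφ : ‖φ‖ ≤ 1) (hφx : φ x = ‖x‖) : ‖φ‖ = 1 := by
  have := φ.le_opNorm x
  rw [hφx, norm_norm] at this
  nlinarith [norm_pos_iff.2 hx]

theorem SmoothPoint.eq_of_apply_eq_norm {x : E} (hx : SmoothPoint E x) {φ ψ : StrongDual ℝ E}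
    (hφ : ‖φ‖ ≤ 1) (hφx : φ x = ‖x‖) (hψ : ‖ψ‖ ≤ 1) (hψx : ψ x = ‖x‖) : φ = ψ :=
  hx.2.unique ⟨StrongDual.norm_eq_one_of_apply_eq_norm hx.1 hφ hφx, hφx⟩
    ⟨StrongDual.norm_eq_one_of_apply_eq_norm hx.1 hψ hψx, hψx⟩

theorem SmoothPoint.map {x : E} (hx : SmoothPoint E x) (S : E →L[ℝ] F) (hS : ‖S‖ ≤ 1)
    (hsurj : Function.Surjective S) (hSx : ‖S x‖ = ‖x‖) : SmoothPoint F (S x) := by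
  have hSx0 : S x ≠ 0 := norm_ne_zero_iff.1 (hSx ▸ norm_ne_zero_iff.2 hx.1)
  obtain ⟨φ, hφ, hφx⟩ := exists_dual_vector ℝ (S x) (norm_ne_zero_iff.2 hSx0)
  refine ⟨hSx0, φ, ⟨hφ, hφx⟩, fun ψ ⟨hψ, hψx⟩ => ?_⟩
  have hcomp : ∀ χ : StrongDual ℝ F, ‖χ‖ = 1 → ‖χ.comp S‖ ≤ 1 := fun χ hχ =>
    (χ.opNorm_comp_le S).trans (by rw [hχ, one_mul]; exact hS)
  have := hx.eq_of_apply_eq_norm (hcomp ψ hψ) (hψx.trans hSx) (hcomp φ hφ) (hφx.trans hSx)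
  ext y
  obtain ⟨z, rfl⟩ := hsurj y
  exact congr($this z)

def ContinuousLinearMap.dualMap (A : E →L[ℝ] F) : StrongDual ℝ F →L[ℝ] StrongDual ℝ E :=
  (ContinuousLinearMap.compL ℝ E F ℝ).flip A

@[simp]
theorem ContinuousLinearMap.dualMap_apply (A : E →L[ℝ] F) (φ : StrongDual ℝ F) :
    A.dualMap φ = φ.comp A :=
  rfl

theorem ContinuousLinearMap.norm_dualMap_le (A : E →L[ℝ] F) : ‖A.dualMap‖ ≤ ‖A‖ :=
  ContinuousLinearMap.opNorm_le_bound _ (norm_nonneg _) fun φ =>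
    (φ.opNorm_comp_le A).trans_eq (mul_comm _ _)

theorem ContinuousLinearMap.dualMap_dualMap_inclusionInDoubleDual (A : E →L[ℝ] F) (x : E) :
    A.dualMap.dualMap (inclusionInDoubleDual ℝ E x) = inclusionInDoubleDual ℝ F (A x) :=
  rfl

theorem VerySmoothPoint.map {x : E} (hx : VerySmoothPoint E x) (S : E →L[ℝ] F) (hS : ‖S‖ ≤ 1)
    (C : F →L[ℝ] E) (hSC : S.comp C = .id ℝ F) (hSx : ‖S x‖ = ‖x‖) :
    VerySmoothPoint F (S x) := by
  have hS₂ : ‖S.dualMap.dualMap‖ ≤ 1 :=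
    S.dualMap.norm_dualMap_le.trans (S.norm_dualMap_le.trans hS)
  have hsurj₂ : Function.Surjective S.dualMap.dualMap := fun Ψ =>
    ⟨C.dualMap.dualMap Ψ, by ext φ; simp [ContinuousLinearMap.comp_assoc, hSC]⟩
  refine ⟨hx.1.map S hS (fun y => ⟨C y, congr($hSC y)⟩) hSx, ?_⟩
  exact hx.2.map S.dualMap.dualMap hS₂ hsurj₂ (by
    rw [S.dualMap_dualMap_inclusionInDoubleDual, norm_inclusionInDoubleDual,
      norm_inclusionInDoubleDual, hSx])

theorem exists_tendsto_ultrafilter_bidual {ι : Type*} (U : Ultrafilter ι) {T : ι → E}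
    {M : ℝ} (hT : ∀ i, ‖T i‖ ≤ M) :
    ∃ Λ : StrongDual ℝ (StrongDual ℝ E), ‖Λ‖ ≤ M ∧
      ∀ φ : StrongDual ℝ E, Tendsto (fun i => φ (T i)) U (𝓝 (Λ φ)) := by
  have hK := WeakDual.isCompact_closedBall (𝕜 := ℝ) (E := StrongDual ℝ E) 0 M
  obtain ⟨Λ, hΛK, hΛ⟩ := hK.ultrafilter_le_nhds
    (U.map (StrongDual.toWeakDual ∘ inclusionInDoubleDual ℝ E ∘ T))
    (le_principal_iff.2 (Filter.mem_map.2 (Eventually.of_forall fun i => by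
      simpa [norm_inclusionInDoubleDual] using hT i)))
  exact ⟨WeakDual.toStrongDual Λ, by simpa using hΛK,
    fun φ => tendsto_iff_forall_eval_tendsto_topDualPairing.1 hΛ φ⟩

end Normed

theorem exists_lt_forall_ne_le_of_isOpen_singleton {Ω : Type*} [TopologicalSpace Ω]
    [CompactSpace Ω] {u : Ω → ℝ} (hu : Continuous u) {ω₀ : Ω} (hω₀ : IsOpen {ω₀})
    (hmax : ∀ ω ≠ ω₀, u ω < u ω₀) : ∃ r < u ω₀, ∀ ω ≠ ω₀, u ω ≤ r := by
  rcases ({ω₀}ᶜ : Set Ω).eq_empty_or_nonempty with hempty | hne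
  · exact ⟨u ω₀ - 1, by linarith, fun ω hω => absurd hempty (Set.nonempty_of_mem hω).ne_empty⟩
  · obtain ⟨ω₁, hω₁, hmax₁⟩ :=
      hω₀.isClosed_compl.isCompact.exists_isMaxOn hne hu.continuousOn
    exact ⟨u ω₁, hmax ω₁ hω₁, fun ω hω => hmax₁ hω⟩

namespace ContinuousMap

variable {Ω X : Type*} [TopologicalSpace Ω] [NormedAddCommGroup X]

theorem norm_eventuallyEq_norm_apply [CompactSpace Ω] {f : C(Ω, X)} {ω₀ : Ω} {r : ℝ}
    (hr : r < ‖f ω₀‖) (hpeak : ∀ ω ≠ ω₀, ‖f ω‖ ≤ r) : (‖·‖) =ᶠ[𝓝 f] fun g => ‖g ω₀‖ := by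
  filter_upwards [ball_mem_nhds f (half_pos (sub_pos.2 hr))] with g hg
  have hclose : ∀ ω, ‖g ω - f ω‖ < (‖f ω₀‖ - r) / 2 := fun ω =>
    ((g - f).norm_coe_le_norm ω).trans_lt (by rwa [← dist_eq_norm])
  refine le_antisymm ((g.norm_le (norm_nonneg _)).2 fun ω => ?_) (g.norm_coe_le_norm ω₀)
  rcases eq_or_ne ω ω₀ with rfl | hω
  · exact le_rfl
  · have h₁ := norm_le_norm_add_norm_sub' (g ω) (f ω)
    have h₂ := norm_sub_norm_le (f ω₀) (f ω₀ - g ω₀)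
    rw [sub_sub_cancel, norm_sub_rev] at h₂
    linarith [hclose ω, hclose ω₀, hpeak ω hω]

variable [NormedSpace ℝ X]

def constCLM : X →L[ℝ] C(Ω, X) where
  toFun := const Ω
  map_add' _ _ := rfl
  map_smul' _ _ := rfl
  cont := continuous_const'

theorem evalCLM_comp_constCLM (ω : Ω) :
    (evalCLM ℝ ω).comp (constCLM : X →L[ℝ] C(Ω, X)) = .id ℝ X :=
  rfl

variable [CompactSpace Ω]

theorem norm_evalCLM_le (ω : Ω) : ‖(evalCLM ℝ ω : C(Ω, X) →L[ℝ] X)‖ ≤ 1 :=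
  ContinuousLinearMap.opNorm_le_bound _ zero_le_one fun g => by
    simpa using g.norm_coe_le_norm ω

theorem norm_comp_evalCLM_le {y : StrongDual ℝ X} (hy : ‖y‖ ≤ 1) (ω : Ω) :
    ‖y.comp (evalCLM ℝ ω : C(Ω, X) →L[ℝ] X)‖ ≤ 1 :=
  (y.opNorm_comp_le _).trans (mul_le_one₀ hy (norm_nonneg _) (norm_evalCLM_le ω))

theorem _root_.SmoothPoint.eq_of_norm_apply_eq [T2Space Ω] {f : C(Ω, X)}
    (hf : SmoothPoint C(Ω, X) f) {ω₁ ω₂ : Ω} (h₁ : ‖f ω₁‖ = ‖f‖) (h₂ : ‖f ω₂‖ = ‖f‖) :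
    ω₁ = ω₂ := by
  by_contra hne
  obtain ⟨y₁, hy₁, hy₁f⟩ := exists_dual_vector'' ℝ (f ω₁)
  obtain ⟨y₂, hy₂, hy₂f⟩ := exists_dual_vector'' ℝ (f ω₂)
  have heq := hf.eq_of_apply_eq_norm (norm_comp_evalCLM_le hy₁ ω₁) (hy₁f.trans h₁)
    (norm_comp_evalCLM_le hy₂ ω₂) (hy₂f.trans h₂)
  obtain ⟨χ, hχ₂, hχ₁, -⟩ := exists_continuous_zero_one_of_isClosed isClosed_singleton
    isClosed_singleton (Set.disjoint_singleton.2 (Ne.symm hne))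
  have := congr($heq (χ • f))
  simp only [ContinuousLinearMap.comp_apply, evalCLM_apply, smul_apply', hχ₁ rfl, hχ₂ rfl,
    Pi.one_apply, Pi.zero_apply, one_smul, zero_smul, map_zero, hy₁f, h₁] at this
  exact hf.1 (norm_eq_zero.1 this)

theorem exists_bidual_comp_evalCLM_eq [T2Space Ω] (f : C(Ω, X)) (ω₀ : Ω) :
    ∃ Ψ : StrongDual ℝ (StrongDual ℝ C(Ω, X)), ∀ y : StrongDual ℝ X,
      Ψ (y.comp (evalCLM ℝ ω₀)) = 0 ∧ ∀ ω ≠ ω₀, Ψ (y.comp (evalCLM ℝ ω)) = y (f ω) := by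
  have hbump (s : Finset Ω) : ∃ χ : C(Ω, ℝ), χ ω₀ = 1 ∧ (∀ ω ∈ s, ω ≠ ω₀ → χ ω = 0) ∧
      ∀ ω, χ ω ∈ Set.Icc (0 : ℝ) 1 := by
    obtain ⟨χ, hχs, hχ₀, hχ⟩ := exists_continuous_zero_one_of_isClosed
      (s := (s : Set Ω) \ {ω₀}) (s.finite_toSet.subset Set.sdiff_subset).isClosed
      isClosed_singleton (Set.disjoint_singleton_right.2 fun h => h.2 rfl)
    exact ⟨χ, hχ₀ rfl, fun ω hω hne => hχs ⟨hω, hne⟩, hχ⟩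
  choose χ hχ₀ hχs hχ using hbump
  set g : Finset Ω → C(Ω, X) := fun s => (1 - χ s) • f
  have hg (s : Finset Ω) : ‖g s‖ ≤ ‖f‖ := by
    refine (g s).norm_le (norm_nonneg _) |>.2 fun ω => ?_
    have hχ₁ : |(1 - χ s) ω| ≤ 1 := by
      rw [sub_apply, one_apply]
      exact abs_le.2 ⟨by linarith [(hχ s ω).2], by linarith [(hχ s ω).1]⟩
    rw [smul_apply', norm_smul, Real.norm_eq_abs]
    exact (mul_le_of_le_one_left (norm_nonneg _) hχ₁).trans (f.norm_coe_le_norm ω)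
  -- `Ψ` is a weak* cluster point of the functions `g s`, which vanish at `ω₀` and agree with `f`
  -- on `s \ {ω₀}`: it plays the role of `f • 𝟙_{Ω \ {ω₀}}`.
  obtain ⟨W, hW⟩ := exists_ultrafilter_le (atTop : Filter (Finset Ω))
  obtain ⟨Ψ, -, hΨ⟩ := exists_tendsto_ultrafilter_bidual W hg
  refine ⟨Ψ, fun y => ⟨tendsto_nhds_unique (hΨ _) ?_, fun ω hω => tendsto_nhds_unique (hΨ _) ?_⟩⟩
  · simp [g, hχ₀]
  · have hmem : ∀ᶠ s in (W : Filter (Finset Ω)), ω ∈ s :=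
      (eventually_ge_atTop {ω}).filter_mono hW |>.mono fun s => Finset.singleton_subset_iff.1
    refine tendsto_const_nhds.congr' (hmem.mono fun s hs => ?_)
    simp [g, hχs s ω hs hω]

theorem isOpen_singleton_of_smoothPoint_inclusionInDoubleDual [T2Space Ω] {f : C(Ω, X)}
    (hf : SmoothPoint _ (inclusionInDoubleDual ℝ C(Ω, X) f)) {ω₀ : Ω} (h₀ : ‖f ω₀‖ = ‖f‖) :
    IsOpen ({ω₀} : Set Ω) := by
  rw [isOpen_singleton_iff_punctured_nhds]
  by_contra hne
  have := neBot_iff.2 hne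
  set U := Ultrafilter.of (𝓝[≠] ω₀)
  obtain ⟨y, hy, hyf⟩ := exists_dual_vector'' ℝ (f ω₀)
  replace hyf : y (f ω₀) = ‖f‖ := hyf.trans h₀
  obtain ⟨Ψ, hΨ⟩ := exists_bidual_comp_evalCLM_eq f ω₀
  obtain ⟨Λ, hΛ, hΛlim⟩ := exists_tendsto_ultrafilter_bidual U
    (T := fun ω => y.comp (evalCLM ℝ ω : C(Ω, X) →L[ℝ] X)) (norm_comp_evalCLM_le hy)
  have hU : (U : Filter Ω) ≤ 𝓝[≠] ω₀ := Ultrafilter.of_le _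
  have hyf_lim : Tendsto (fun ω => y (f ω)) U (𝓝 ‖f‖) := by
    rw [← hyf]
    exact ((y.continuous.comp f.continuous).tendsto ω₀).mono_left (hU.trans nhdsWithin_le_nhds)
  have hΛf : Λ (inclusionInDoubleDual ℝ _ f) = ‖inclusionInDoubleDual ℝ _ f‖ := by
    rw [norm_inclusionInDoubleDual]
    exact tendsto_nhds_unique (hΛlim _) hyf_lim
  have hΛΨ : Λ Ψ = ‖f‖ := by
    refine tendsto_nhds_unique (hΛlim _) (hyf_lim.congr' ?_)
    filter_upwards [hU self_mem_nhdsWithin] with ω hω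
    exact ((hΨ y).2 ω hω).symm
  have heq := hf.eq_of_apply_eq_norm hΛ hΛf
    ((norm_inclusionInDoubleDual _).trans_le (norm_comp_evalCLM_le hy ω₀))
    (by rw [norm_inclusionInDoubleDual]; exact hyf)
  have hf0 : ‖f‖ ≠ 0 := fun h => hf.1 (by rw [norm_eq_zero.1 h, map_zero])
  exact hf0 (hΛΨ.symm.trans (congr($heq Ψ).trans (hΨ y).1))

theorem exists_strict_norm_peak_of_verySmoothPoint [T2Space Ω] {f : C(Ω, X)}
    (hf : VerySmoothPoint C(Ω, X) f) : ∃ ω₀, ∃ r < ‖f ω₀‖, ∀ ω ≠ ω₀, ‖f ω‖ ≤ r := by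
  have : Nonempty Ω := by
    by_contra h
    exact hf.1.1 (ext fun ω => (h ⟨ω⟩).elim)
  obtain ⟨ω₀, -, hω₀⟩ := isCompact_univ.exists_isMaxOn Set.univ_nonempty
    f.continuous.norm.continuousOn
  have h₀ : ‖f ω₀‖ = ‖f‖ :=
    le_antisymm (f.norm_coe_le_norm ω₀) (f.norm_le (norm_nonneg _) |>.2 fun ω => hω₀ trivial)
  refine ⟨ω₀, exists_lt_forall_ne_le_of_isOpen_singleton f.continuous.norm
    (isOpen_singleton_of_smoothPoint_inclusionInDoubleDual hf.2 h₀) fun ω hω => ?_⟩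
  refine lt_of_le_of_ne (h₀ ▸ f.norm_coe_le_norm ω) fun h => hω ?_
  exact hf.1.eq_of_norm_apply_eq (h.trans h₀) h₀

end ContinuousMap

theorem frechet_smooth_of_very_smooth_continuousMap_general
    {Ω : Type*} [TopologicalSpace Ω] [CompactSpace Ω] [T2Space Ω]
    {X : Type*} [NormedAddCommGroup X] [NormedSpace ℝ X]
    (hX : ∀ x : X, VerySmoothPoint X x → FrechetSmoothPoint X x)
    (f : C(Ω, X)) (hf : VerySmoothPoint C(Ω, X) f) :
    FrechetSmoothPoint C(Ω, X) f := by
  obtain ⟨ω₀, r, hr, hpeak⟩ := ContinuousMap.exists_strict_norm_peak_of_verySmoothPoint hf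
  have hnorm := ContinuousMap.norm_eventuallyEq_norm_apply hr hpeak
  have hf₀ : VerySmoothPoint X (f ω₀) :=
    hf.map _ (ContinuousMap.norm_evalCLM_le ω₀) ContinuousMap.constCLM
      (ContinuousMap.evalCLM_comp_constCLM ω₀) hnorm.self_of_nhds.symm
  simp only [frechetSmoothPoint_iff_differentiableAt] at hX ⊢
  have hd : DifferentiableAt ℝ (fun g : C(Ω, X) => ‖g ω₀‖) f :=
    (hX _ hf₀).comp f (ContinuousMap.evalCLM ℝ ω₀ : C(Ω, X) →L[ℝ] X).differentiableAt
  exact hd.congr_of_eventuallyEq hnorm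

theorem frechet_smooth_of_very_smooth_continuousMap
    {Ω : Type*} [TopologicalSpace Ω] [CompactSpace Ω] [T2Space Ω]
    {X : Type*} [NormedAddCommGroup X] [NormedSpace ℝ X] [CompleteSpace X]
    (hX : ∀ x : X, VerySmoothPoint X x → FrechetSmoothPoint X x)
    (f : C(Ω, X)) (hf : VerySmoothPoint C(Ω, X) f) :
    FrechetSmoothPoint C(Ω, X) f :=
  frechet_smooth_of_very_smooth_continuousMap_general hX f hf
end
end

section
/- Let X be a real Banach space with X = M ⊕_∞ N for closed subspaces M, N. Let x = m + n with m ∈ M, n ∈ N, ‖m‖ = 1 and ‖n‖ < 1. If m is a QP point of the Banach space M, then x is a QP point of X. -/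
open Filter Topology Metric Set NormedSpace MeasureTheory

noncomputable section

/-!
In an `ℓ∞`-sum, a functional of norm at most one that equals `1` at `m + n` with `‖m‖ ≤ 1` and
`‖n‖ < 1` must vanish on `n`, so `S_{m+n} = S_m`. A norm-one `z = m' + n'` close to `m + n` has
again `‖n'‖ < 1`, hence `‖m'‖ = 1` and `S_z = S_{m'}`; restricting functionals to `M` reduces the
claim to the QP property of `m` in `M`.
-/

namespace StateSpace

variable {X : Type*} [NormedAddCommGroup X] [NormedSpace ℝ X]

theorem restrict_mem_iff {M : Submodule ℝ X} {x : X} (hx : x ∈ M) {f : StrongDual ℝ X}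
    (hf : ‖f‖ ≤ 1) :
    f.comp M.subtypeL ∈ StateSpace (⟨x, hx⟩ : M) ↔ f ∈ StateSpace x := by
  have hrestrict : ‖f.comp M.subtypeL‖ ≤ 1 :=
    (f.opNorm_comp_le _).trans (mul_le_one₀ hf (norm_nonneg _) (Submodule.norm_subtypeL_le M))
  exact ⟨fun h => ⟨hf, h.2⟩, fun h => ⟨hrestrict, h.2⟩⟩

/-- Both `m + n / ‖n‖` and `m - n / ‖n‖` lie in the unit ball, because the norm only sees the
larger of the two summands. -/
theorem abs_apply_le_of_norm_add_le_max {M N : Submodule ℝ X}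
    (hmax : ∀ m ∈ M, ∀ n ∈ N, ‖m + n‖ ≤ max ‖m‖ ‖n‖) {m n : X} (hm : m ∈ M) (hn : n ∈ N)
    (hm1 : ‖m‖ ≤ 1) {f : StrongDual ℝ X} (hf : ‖f‖ ≤ 1) :
    |f n| ≤ (1 - f m) * ‖n‖ := by
  rcases eq_or_ne n 0 with rfl | hn0
  · simp
  have hpos : 0 < ‖n‖ := norm_pos_iff.2 hn0
  have hsigned : ∀ s : ℝ, |s| = 1 → f m * ‖n‖ + s * f n ≤ ‖n‖ := by
    intro s hs
    have hunit : ‖m + (s * ‖n‖⁻¹) • n‖ ≤ 1 := by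
      refine (hmax m hm _ (N.smul_mem _ hn)).trans (max_le hm1 ?_)
      rw [norm_smul, Real.norm_eq_abs, abs_mul, hs, abs_inv, abs_norm, one_mul,
        inv_mul_cancel₀ hpos.ne']
    have hle : f (m + (s * ‖n‖⁻¹) • n) ≤ 1 := by
      simpa using (le_abs_self _).trans (f.le_of_opNorm_le_of_le hf hunit)
    rw [map_add, map_smul, smul_eq_mul] at hle
    have := mul_le_mul_of_nonneg_right hle hpos.le
    field_simp at this
    linarith
  rcases abs_choice (f n) with h | h
  · linarith [hsigned 1 (by simp)]
  · linarith [hsigned (-1) (by simp)]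

theorem add_eq {M N : Submodule ℝ X}
    (hmax : ∀ m ∈ M, ∀ n ∈ N, ‖m + n‖ ≤ max ‖m‖ ‖n‖) {m n : X} (hm : m ∈ M) (hn : n ∈ N)
    (hm1 : ‖m‖ ≤ 1) (hn1 : ‖n‖ < 1) :
    StateSpace (m + n) = StateSpace m := by
  ext f
  refine ⟨fun ⟨hf, hfx⟩ => ⟨hf, ?_⟩, fun ⟨hf, hfm⟩ => ⟨hf, ?_⟩⟩
  · have hbound := abs_apply_le_of_norm_add_le_max hmax hm hn hm1 hf
    rw [map_add] at hfx
    have hfn : f n = 0 := by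
      by_contra hne
      have : |f n| < |f n| := calc
        |f n| ≤ f n * ‖n‖ := hbound.trans_eq (by rw [← hfx]; ring)
        _ ≤ |f n| * ‖n‖ := mul_le_mul_of_nonneg_right (le_abs_self _) (norm_nonneg _)
        _ < |f n| := mul_lt_of_lt_one_right (abs_pos.2 hne) hn1
      exact this.false
    linarith
  · have hbound := abs_apply_le_of_norm_add_le_max hmax hm hn hm1 hf
    rw [hfm, sub_self, zero_mul, abs_nonpos_iff] at hbound
    rw [map_add, hfm, hbound, add_zero]

end StateSpace

theorem qp_point_of_MSumDecomp_general
    {X : Type*} [NormedAddCommGroup X] [NormedSpace ℝ X]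
    (M N : Submodule ℝ X) (hdec : MSumDecomp M N)
    (m n : X) (hm : m ∈ M) (hn : n ∈ N) (hm1 : ‖m‖ = 1) (hn1 : ‖n‖ < 1)
    (hQP : QPPoint M (⟨m, hm⟩ : M)) :
    QPPoint X (m + n) := by
  obtain ⟨-, -, -, hsup, hmax⟩ := hdec
  have hmax_le : ∀ a ∈ M, ∀ b ∈ N, ‖a + b‖ ≤ max ‖a‖ ‖b‖ := fun a ha b hb => (hmax a ha b hb).le
  obtain ⟨δ, hδ, hQP⟩ := hQP
  refine ⟨min δ (1 - ‖n‖), lt_min hδ (by linarith), fun z hz hzx f hf => ?_⟩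
  obtain ⟨m', hm', n', hn', rfl⟩ : ∃ m' ∈ M, ∃ n' ∈ N, m' + n' = z :=
    Submodule.mem_sup.1 (hsup ▸ Submodule.mem_top)
  rw [add_sub_add_comm, hmax _ (M.sub_mem hm' hm) _ (N.sub_mem hn' hn), lt_min_iff,
    max_lt_iff, max_lt_iff] at hzx
  have hn'1 : ‖n'‖ < 1 := by linarith [norm_le_norm_add_norm_sub' n' n]
  have hm'1 : ‖m'‖ = 1 := by
    rw [hmax m' hm' n' hn'] at hz
    rcases max_choice ‖m'‖ ‖n'‖ with h | h <;> rw [h] at hz <;> linarith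
  rw [StateSpace.add_eq hmax_le hm' hn' hm'1.le hn'1] at hf
  rw [StateSpace.add_eq hmax_le hm hn hm1.le hn1, ← StateSpace.restrict_mem_iff hm hf.1]
  exact hQP ⟨m', hm'⟩ hm'1 hzx.1.1 ((StateSpace.restrict_mem_iff hm' hf.1).2 hf)

theorem qp_point_of_MSumDecomp
    {X : Type*} [NormedAddCommGroup X] [NormedSpace ℝ X] [CompleteSpace X]
    (M N : Submodule ℝ X) (hdec : MSumDecomp M N)
    (m n : X) (hm : m ∈ M) (hn : n ∈ N) (hm1 : ‖m‖ = 1) (hn1 : ‖n‖ < 1)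
    (hQP : QPPoint M (⟨m, hm⟩ : M)) :
    QPPoint X (m + n) :=
  qp_point_of_MSumDecomp_general M N hdec m n hm hn hm1 hn1 hQP
end
end

section
/- Let X be a real Banach space with X = M ⊕_∞ N for closed subspaces M, N. If m ∈ M is a unit vector which is a QP point of the Banach space M, then m is a QP point of X. -/
open Filter Topology Metric Set NormedSpace MeasureTheory

noncomputable section

/-! Decompose a norm-one `z` near `m` as `z = u + n` with `u ∈ M`, `n ∈ N`. Then `u` is near `m`
and `‖n‖ < 1`, so `‖u‖ = 1` and `‖u + s • n‖ = 1` for some `s > 1`. A norming functional `f` of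
`z` therefore satisfies `f u + s f n ≤ 1 = f u + f n` and `f u ≤ 1`, forcing `f n = 0`: it norms
`u`, its restriction to `M` norms `u` in `M`, and the QP property of `m` in `M` applies. -/

section

variable {X : Type*} [NormedAddCommGroup X] [NormedSpace ℝ X]

lemma StateSpace.apply_eq_zero_of_norm_add_smul_le {x y : X} {f : StrongDual ℝ X}
    (hf : f ∈ StateSpace (x + y)) (hx : ‖x‖ ≤ 1) {s : ℝ} (hs : 1 < s)
    (hxy : ‖x + s • y‖ ≤ 1) : f y = 0 := by
  have bound : ∀ v : X, ‖v‖ ≤ 1 → f v ≤ 1 := fun v hv =>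
    (le_abs_self _).trans <| (f.le_opNorm v).trans <| mul_le_one₀ hf.1 (norm_nonneg v) hv
  have hsum : f x + f y = 1 := by rw [← map_add, hf.2]
  have hscaled : f x + s * f y ≤ 1 := by simpa using bound _ hxy
  nlinarith [bound x hx]

lemma StateSpace.comp_subtypeL_mem {M : Submodule ℝ X} {x : M} {f : StrongDual ℝ X}
    (hf : f ∈ StateSpace (x : X)) : f.comp M.subtypeL ∈ StateSpace x :=
  ⟨(f.opNorm_comp_le _).trans (mul_le_one₀ hf.1 (norm_nonneg _) (Submodule.norm_subtypeL_le M)),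
    hf.2⟩

lemma norm_left_eq_of_norm_add_eq_max {M N : Submodule ℝ X}
    (hmax : ∀ m ∈ M, ∀ n ∈ N, ‖m + n‖ = max ‖m‖ ‖n‖) {u n : X} (hu : u ∈ M) (hn : n ∈ N)
    (hnu : ‖n‖ < ‖u + n‖) : ‖u‖ = ‖u + n‖ := by
  rw [hmax u hu n hn] at hnu ⊢
  exact (max_eq_left (le_of_not_gt fun h => (max_eq_right h.le ▸ hnu).false)).symm

lemma mem_stateSpace_left_of_norm_add_eq_max {M N : Submodule ℝ X}
    (hmax : ∀ m ∈ M, ∀ n ∈ N, ‖m + n‖ = max ‖m‖ ‖n‖) {u n : X} (hu : u ∈ M) (hn : n ∈ N)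
    (hu1 : ‖u‖ ≤ 1) (hn1 : ‖n‖ < 1) {f : StrongDual ℝ X} (hf : f ∈ StateSpace (u + n)) :
    f ∈ StateSpace u := by
  -- any `s ∈ (1, 1/‖n‖]` works; this one avoids a case split on `n = 0`
  set s := 2 / (1 + ‖n‖)
  have hs : 1 < s := by rw [lt_div_iff₀ (by positivity)]; linarith
  have hsn : ‖s • n‖ ≤ 1 := by
    rw [norm_smul, Real.norm_of_nonneg (by positivity), div_mul_eq_mul_div,
      div_le_one (by positivity)]
    linarith
  have hfn : f n = 0 := StateSpace.apply_eq_zero_of_norm_add_smul_le hf hu1 hs <| by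
    rw [hmax u hu _ (N.smul_mem s hn)]
    exact max_le hu1 hsn
  exact ⟨hf.1, by simpa [hfn] using hf.2⟩

end

theorem qp_point_of_MSummand_general
    {X : Type*} [NormedAddCommGroup X] [NormedSpace ℝ X]
    (M N : Submodule ℝ X) (hdec : MSumDecomp M N)
    (m : X) (hm : m ∈ M)
    (hQP : QPPoint M (⟨m, hm⟩ : M)) :
    QPPoint X m := by
  obtain ⟨-, -, -, hsup, hmax⟩ := hdec
  obtain ⟨δ, hδ, hQP⟩ := hQP
  refine ⟨min δ 1, lt_min hδ one_pos, fun z hz1 hzm f hf => ?_⟩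
  obtain ⟨u, hu, n, hn, rfl⟩ := Submodule.mem_sup.mp (hsup ▸ Submodule.mem_top : z ∈ M ⊔ N)
  have hdist : ‖u + n - m‖ = max ‖u - m‖ ‖n‖ := by
    rw [add_sub_right_comm, hmax _ (M.sub_mem hu hm) _ hn]
  rw [hdist, max_lt_iff, lt_min_iff, lt_min_iff] at hzm
  have hu1 : ‖(⟨u, hu⟩ : M)‖ = 1 :=
    hz1 ▸ norm_left_eq_of_norm_add_eq_max hmax hu hn (hz1 ▸ hzm.2.2)
  have hfu := mem_stateSpace_left_of_norm_add_eq_max hmax hu hn hu1.le hzm.2.2 hf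
  exact ⟨hf.1, (hQP ⟨u, hu⟩ hu1 hzm.1.1 (StateSpace.comp_subtypeL_mem hfu)).2⟩

theorem qp_point_of_MSummand
    {X : Type*} [NormedAddCommGroup X] [NormedSpace ℝ X] [CompleteSpace X]
    (M N : Submodule ℝ X) (hdec : MSumDecomp M N)
    (m : X) (hm : m ∈ M) (hm1 : ‖m‖ = 1)
    (hQP : QPPoint M (⟨m, hm⟩ : M)) :
    QPPoint X m :=
  qp_point_of_MSummand_general M N hdec m hm hQP
end
end

section
/- Let X be a real Banach space such that every very smooth point of X is a Fréchet smooth point of X, and let J ⊆ X be an M-ideal. Then every very smooth point of J is a Fréchet smooth point of J. -/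
open Filter Topology Metric Set NormedSpace MeasureTheory

noncomputable section

/-- The annihilator of a subspace `J ⊆ X` in the continuous dual `X*`. -/
def annihilator' {X : Type*} [NormedAddCommGroup X] [NormedSpace ℝ X]
    (J : Submodule ℝ X) : Submodule ℝ (StrongDual ℝ X) where
  carrier := {f : StrongDual ℝ X | ∀ x ∈ J, f x = 0}
  add_mem' := fun hf hg x hx => by
    simp only [ContinuousLinearMap.add_apply, hf x hx, hg x hx, add_zero]
  zero_mem' := fun x _ => rfl
  smul_mem' := fun c f hf x hx => by
    simp only [ContinuousLinearMap.coe_smul', Pi.smul_apply, hf x hx, smul_zero]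

/-- `J` is an M-ideal in `X`: `J` is closed and `J^⊥` is an L-summand of `X*`. -/
def IsMIdeal {X : Type*} [NormedAddCommGroup X] [NormedSpace ℝ X]
    (J : Submodule ℝ X) : Prop :=
  IsClosed (J : Set X) ∧
    ∃ N : Submodule ℝ (StrongDual ℝ X), LSumDecomp (annihilator' J) N

/-!
If `X* = J^⊥ ⊕₁ N`, restriction to `J` maps `N` isometrically onto `J*`; inverting it gives an
extension operator `E : J* → X*` for which `f ↦ E (f|_J)` is an L-projection of `X*`. Hence every
functional on `J` has exactly one norm-preserving extension to `X`. Dualising twice, the adjoint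
of an L-projection is an M-projection and the adjoint of an M-projection is an L-projection, so
the same holds for `J** ⊆ X**`. Unique norm-preserving extension carries smooth points to smooth
points, so a very smooth point of `J` is a very smooth point of `X`, hence Fréchet smooth there,
and Fréchet smoothness restricts to the subspace `J`.
-/

namespace ContinuousLinearMap

variable {E F : Type*} [NormedAddCommGroup E] [NormedSpace ℝ E]
  [NormedAddCommGroup F] [NormedSpace ℝ F]

def dualMap_s14 (L : E →L[ℝ] F) : StrongDual ℝ F →L[ℝ] StrongDual ℝ E :=
  precomp (𝕜₃ := ℝ) ℝ L

@[simp]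
theorem dualMap_apply_s14 (L : E →L[ℝ] F) (f : StrongDual ℝ F) : L.dualMap_s14 f = f.comp L := rfl

theorem norm_dualMap_le_s14 (L : E →L[ℝ] F) : ‖L.dualMap_s14‖ ≤ ‖L‖ :=
  opNorm_le_bound _ (norm_nonneg L) fun f => by
    simpa [mul_comm ‖L‖] using f.opNorm_comp_le L

theorem exists_norm_le_one_lt_apply (f : StrongDual ℝ E) {r : ℝ} (hr : r < ‖f‖) :
    ∃ x : E, ‖x‖ ≤ 1 ∧ r < f x := by
  obtain ⟨x, hx, hrx⟩ := f.exists_lt_apply_of_lt_opNorm hr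
  rcases le_or_gt 0 (f x) with hfx | hfx
  · exact ⟨x, hx.le, by rwa [Real.norm_of_nonneg hfx] at hrx⟩
  · refine ⟨-x, by rw [norm_neg]; exact hx.le, ?_⟩
    rwa [Real.norm_of_nonpos hfx.le, ← map_neg] at hrx

theorem norm_eq_one_of_apply_eq_norm (f : StrongDual ℝ E) {x : E} (hx : x ≠ 0)
    (hf : ‖f‖ ≤ 1) (hfx : f x = ‖x‖) : ‖f‖ = 1 := by
  refine le_antisymm hf (le_of_mul_le_mul_right ?_ (norm_pos_iff.mpr hx))
  calc 1 * ‖x‖ = ‖f x‖ := by rw [hfx, one_mul, norm_norm]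
    _ ≤ ‖f‖ * ‖x‖ := f.le_opNorm x

end ContinuousLinearMap

open ContinuousLinearMap

section Projections

variable {V : Type*} [NormedAddCommGroup V] [NormedSpace ℝ V]

theorem IsLprojection.norm_le_one {P : V →L[ℝ] V} (hP : IsLprojection V P) : ‖P‖ ≤ 1 :=
  opNorm_le_bound _ zero_le_one fun x => by
    have := hP.Lnorm x
    rw [ContinuousLinearMap.smul_def] at this
    linarith [norm_nonneg ((1 - P) • x)]

theorem IsMprojection.norm_apply_le {P : V →L[ℝ] V} (hP : IsMprojection V P) (x : V) :
    ‖P x‖ ≤ ‖x‖ ∧ ‖(1 - P) x‖ ≤ ‖x‖ := by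
  rw [hP.Mnorm x, ← ContinuousLinearMap.smul_def, ← ContinuousLinearMap.smul_def]
  exact ⟨le_max_left _ _, le_max_right _ _⟩

theorem IsIdempotentElem.dualMap_s14 {P : V →L[ℝ] V} (hP : IsIdempotentElem P) :
    IsIdempotentElem P.dualMap_s14 := by
  ext f x
  change f (P (P x)) = f (P x)
  rw [← mul_apply_eq_comp, hP.eq]

theorem one_sub_dualMap (P : V →L[ℝ] V) : 1 - P.dualMap_s14 = (1 - P).dualMap_s14 := by
  ext f x
  simp

theorem IsLprojection.isMprojection_dualMap {P : V →L[ℝ] V} (hP : IsLprojection V P) :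
    IsMprojection (StrongDual ℝ V) P.dualMap_s14 := by
  refine ⟨hP.proj.dualMap_s14, fun f => ?_⟩
  simp only [ContinuousLinearMap.smul_def, one_sub_dualMap, dualMap_apply_s14]
  refine le_antisymm (opNorm_le_bound _ (by positivity) fun x => ?_) (max_le ?_ ?_)
  · have hx : f x = f.comp P (P x) + f.comp (1 - P) ((1 - P) x) := by
      simp only [comp_apply, ← mul_apply_eq_comp, hP.proj.eq, hP.Lcomplement.proj.eq]
      simp
    have hLx := hP.Lnorm x
    simp only [ContinuousLinearMap.smul_def] at hLx
    calc ‖f x‖ ≤ ‖f.comp P‖ * ‖P x‖ + ‖f.comp (1 - P)‖ * ‖(1 - P) x‖ := by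
          rw [hx]
          exact (norm_add_le _ _).trans (add_le_add (le_opNorm _ _) (le_opNorm _ _))
      _ ≤ max ‖f.comp P‖ ‖f.comp (1 - P)‖ * (‖P x‖ + ‖(1 - P) x‖) := by
          rw [mul_add]
          gcongr
          exacts [le_max_left _ _, le_max_right _ _]
      _ = max ‖f.comp P‖ ‖f.comp (1 - P)‖ * ‖x‖ := by rw [← hLx]
  · exact (f.opNorm_comp_le P).trans (mul_le_of_le_one_right (norm_nonneg f) hP.norm_le_one)
  · exact (f.opNorm_comp_le _).trans
      (mul_le_of_le_one_right (norm_nonneg f) hP.Lcomplement.norm_le_one)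

theorem IsMprojection.isLprojection_dualMap {P : V →L[ℝ] V} (hP : IsMprojection V P) :
    IsLprojection (StrongDual ℝ V) P.dualMap_s14 := by
  refine ⟨hP.proj.dualMap_s14, fun f => ?_⟩
  simp only [ContinuousLinearMap.smul_def, one_sub_dualMap, dualMap_apply_s14]
  refine le_antisymm ?_ (le_of_forall_pos_le_add fun ε hε => ?_)
  · calc ‖f‖ = ‖f.comp P + f.comp (1 - P)‖ := by rw [← comp_add, add_sub_cancel]; rfl
      _ ≤ _ := norm_add_le _ _
  obtain ⟨a, ha, hfa⟩ := (f.comp P).exists_norm_le_one_lt_apply (sub_lt_self _ (half_pos hε))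
  obtain ⟨b, hb, hfb⟩ := (f.comp (1 - P)).exists_norm_le_one_lt_apply
    (sub_lt_self _ (half_pos hε))
  set y := P a + (1 - P) b
  have hy : ‖y‖ ≤ 1 := by
    have hPy : P y = P a := by
      simp [y, ← mul_apply_eq_comp, hP.proj.eq]
    have hQy : (1 - P) y = (1 - P) b := by
      simp [y, ← mul_apply_eq_comp, hP.proj.eq]
    rw [hP.Mnorm y, ContinuousLinearMap.smul_def, ContinuousLinearMap.smul_def, hPy, hQy]
    exact max_le ((hP.norm_apply_le a).1.trans ha) ((hP.norm_apply_le b).2.trans hb)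
  have hfy : f y ≤ ‖f‖ :=
    (le_abs_self _).trans ((f.le_opNorm y).trans (mul_le_of_le_one_right (norm_nonneg f) hy))
  have : f y = f.comp P a + f.comp (1 - P) b := map_add f _ _
  linarith

end Projections

section Extension

variable {Z Y : Type*} [NormedAddCommGroup Z] [NormedSpace ℝ Z]
  [NormedAddCommGroup Y] [NormedSpace ℝ Y]

def UniqueNormPreservingExtension (T : Z →L[ℝ] Y) : Prop :=
  ∀ g : StrongDual ℝ Z, ∃! f : StrongDual ℝ Y, f.comp T = g ∧ ‖f‖ ≤ ‖g‖

theorem UniqueNormPreservingExtension.of_isLprojection {T : Z →L[ℝ] Y}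
    {E : StrongDual ℝ Z →L[ℝ] StrongDual ℝ Y} (hT : ‖T‖ ≤ 1) (hE : ‖E‖ ≤ 1)
    (hET : ∀ g, (E g).comp T = g) (hL : IsLprojection (StrongDual ℝ Y) (E ∘L T.dualMap_s14)) :
    UniqueNormPreservingExtension T := by
  intro g
  refine ⟨E g, ⟨hET g, by simpa using E.le_of_opNorm_le hE g⟩, ?_⟩
  rintro f ⟨rfl, hf⟩
  have hLf := hL.Lnorm f
  simp only [ContinuousLinearMap.smul_def, sub_apply, one_apply_eq_self,
    comp_apply, dualMap_apply_s14] at hLf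
  have hg : ‖f.comp T‖ ≤ ‖E (f.comp T)‖ := by
    conv_lhs => rw [← hET (f.comp T)]
    exact (opNorm_comp_le _ _).trans (mul_le_of_le_one_right (norm_nonneg _) hT)
  have : ‖f - E (f.comp T)‖ ≤ 0 := by linarith
  exact (sub_eq_zero.mp (norm_le_zero_iff.mp this))

theorem UniqueNormPreservingExtension.dualMap_of_isLprojection {R : Y →L[ℝ] Z} {E : Z →L[ℝ] Y}
    (hR : ‖R‖ ≤ 1) (hE : ‖E‖ ≤ 1) (hRE : ∀ z, R (E z) = z) (hL : IsLprojection Y (E ∘L R)) :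
    UniqueNormPreservingExtension R.dualMap_s14 := by
  refine .of_isLprojection (E := E.dualMap_s14.dualMap_s14) ((norm_dualMap_le_s14 R).trans hR)
    ((norm_dualMap_le_s14 _).trans ((norm_dualMap_le_s14 E).trans hE)) (fun g => ?_) ?_
  · ext f
    change g ((f.comp R).comp E) = g f
    congr 1
    ext z
    simp [hRE]
  · exact hL.isMprojection_dualMap.isLprojection_dualMap

theorem SmoothPoint.map_s14 {T : Z →L[ℝ] Y} (hT : ‖T‖ ≤ 1) (hU : UniqueNormPreservingExtension T)
    {z : Z} (hz : SmoothPoint Z z) : SmoothPoint Y (T z) := by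
  obtain ⟨hz0, g, ⟨hg1, hgz⟩, hg⟩ := hz
  obtain ⟨f, ⟨hfT, hf⟩, hf_uniq⟩ := hU g
  rw [hg1] at hf
  have hTz : ‖T z‖ = ‖z‖ := by
    refine le_antisymm (T.le_of_opNorm_le hT z |>.trans_eq (one_mul _)) ?_
    calc ‖z‖ = f (T z) := by rw [← comp_apply, hfT, hgz]
      _ ≤ ‖f‖ * ‖T z‖ := (le_abs_self _).trans (f.le_opNorm _)
      _ ≤ ‖T z‖ := mul_le_of_le_one_left (norm_nonneg _) hf
  have hTz0 : T z ≠ 0 := by rwa [← norm_ne_zero_iff, hTz, norm_ne_zero_iff]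
  have hfz : f (T z) = ‖T z‖ := by rw [hTz, ← comp_apply, hfT, hgz]
  refine ⟨hTz0, f, ⟨f.norm_eq_one_of_apply_eq_norm hTz0 hf hfz, hfz⟩, fun f' ⟨hf'1, hf'z⟩ => ?_⟩
  have hf'T : ‖f'.comp T‖ ≤ 1 :=
    (opNorm_comp_le _ _).trans (by rw [hf'1, one_mul]; exact hT)
  have hf'Tz : f'.comp T z = ‖z‖ := by rw [comp_apply, hf'z, hTz]
  have hg' : f'.comp T = g :=
    hg _ ⟨(f'.comp T).norm_eq_one_of_apply_eq_norm hz0 hf'T hf'Tz, hf'Tz⟩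
  exact hf_uniq f' ⟨hg', by rw [hf'1, hg1]⟩

end Extension

theorem FrechetSmoothPoint.of_linearIsometry {Z Y : Type*} [NormedAddCommGroup Z]
    [NormedSpace ℝ Z] [NormedAddCommGroup Y] [NormedSpace ℝ Y] (T : Z →ₗᵢ[ℝ] Y) {z : Z}
    (h : FrechetSmoothPoint Y (T z)) : FrechetSmoothPoint Z z := by
  obtain ⟨f, hf⟩ := h
  have hT : Tendsto T (𝓝[≠] 0) (𝓝[≠] 0) := by
    refine tendsto_nhdsWithin_iff.mpr ⟨?_, eventually_nhdsWithin_of_forall fun y hy => ?_⟩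
    · exact (T.continuous.tendsto' 0 0 (map_zero T)).mono_left nhdsWithin_le_nhds
    · exact (map_ne_zero_iff T T.injective).mpr hy
  refine ⟨f.comp T.toContinuousLinearMap, (hf.comp hT).congr fun y => ?_⟩
  simp [← map_add]

-- The subspace is given by an isometric embedding `ι` rather than as a `Submodule`: instance
-- search does not equip the iterated duals of a subtype with their norms.
section MIdeal

variable {Z X : Type*} [NormedAddCommGroup Z] [NormedSpace ℝ Z]
  [NormedAddCommGroup X] [NormedSpace ℝ X]

theorem LinearIsometry.exists_extension_norm_eq (ι : Z →ₗᵢ[ℝ] X) (g : StrongDual ℝ Z) :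
    ∃ f : StrongDual ℝ X, f.comp ι.toContinuousLinearMap = g ∧ ‖f‖ = ‖g‖ := by
  let e : Z ≃ₗᵢ[ℝ] LinearMap.range ι.toLinearMap :=
    { LinearEquiv.ofInjective ι.toLinearMap ι.injective with norm_map' := ι.norm_map }
  obtain ⟨f, hf, hfn⟩ := _root_.exists_extension_norm_eq (LinearMap.range ι.toLinearMap)
    (g.comp e.symm.toContinuousLinearEquiv.toContinuousLinearMap)
  refine ⟨f, ContinuousLinearMap.ext fun z => ?_, hfn.trans (opNorm_comp_linearIsometryEquiv _ _)⟩
  exact (hf (e z)).trans (congrArg g (e.symm_apply_apply z))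

variable {ι : Z →ₗᵢ[ℝ] X} {N : Submodule ℝ (StrongDual ℝ X)}

namespace LSumDecomp

variable (hN : LSumDecomp (annihilator' (LinearMap.range ι.toLinearMap)) N)
include hN

theorem norm_comp_of_mem {n : StrongDual ℝ X} (hn : n ∈ N) :
    ‖n.comp ι.toContinuousLinearMap‖ = ‖n‖ := by
  refine le_antisymm ((opNorm_comp_le _ _).trans
    (mul_le_of_le_one_right (norm_nonneg _) ι.norm_toContinuousLinearMap_le)) ?_
  obtain ⟨f, hf, hfn⟩ := ι.exists_extension_norm_eq (n.comp ι.toContinuousLinearMap)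
  have hp : f - n ∈ annihilator' (LinearMap.range ι.toLinearMap) := by
    rintro - ⟨z, rfl⟩
    simpa [sub_eq_zero] using congrArg (· z) hf
  calc ‖n‖ ≤ ‖f - n‖ + ‖n‖ := le_add_of_nonneg_left (norm_nonneg _)
    _ = ‖f‖ := by rw [← hN.2.2.2.2 _ hp _ hn, sub_add_cancel]
    _ = _ := hfn

theorem exists_mem_comp_eq (g : StrongDual ℝ Z) :
    ∃ n ∈ N, n.comp ι.toContinuousLinearMap = g := by
  obtain ⟨f, hf, -⟩ := ι.exists_extension_norm_eq g
  have hf_mem : f ∈ annihilator' (LinearMap.range ι.toLinearMap) ⊔ N :=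
    hN.2.2.2.1 ▸ Submodule.mem_top
  obtain ⟨p, hp, n, hn, rfl⟩ := Submodule.mem_sup.mp hf_mem
  refine ⟨n, hn, ContinuousLinearMap.ext fun z => ?_⟩
  simpa [hp (ι z) ⟨z, rfl⟩] using congrArg (· z) hf

def restriction : N →ₗᵢ[ℝ] StrongDual ℝ Z where
  toLinearMap := ι.toContinuousLinearMap.dualMap_s14.toLinearMap ∘ₗ N.subtype
  norm_map' n := hN.norm_comp_of_mem n.2

theorem restriction_surjective : Function.Surjective hN.restriction := by
  intro g
  obtain ⟨n, hn, hng⟩ := hN.exists_mem_comp_eq g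
  exact ⟨⟨n, hn⟩, hng⟩

def restrictionEquiv : N ≃ₗᵢ[ℝ] StrongDual ℝ Z :=
  LinearIsometryEquiv.ofSurjective (F := N) hN.restriction hN.restriction_surjective

def extension : StrongDual ℝ Z →L[ℝ] StrongDual ℝ X :=
  N.subtypeL.comp hN.restrictionEquiv.symm.toContinuousLinearEquiv.toContinuousLinearMap

theorem extension_comp (g : StrongDual ℝ Z) :
    (hN.extension g).comp ι.toContinuousLinearMap = g :=
  hN.restrictionEquiv.apply_symm_apply g

theorem extension_mem (g : StrongDual ℝ Z) : hN.extension g ∈ N :=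
  (hN.restrictionEquiv.symm g).2

theorem norm_extension_le : ‖hN.extension‖ ≤ 1 :=
  opNorm_le_bound _ zero_le_one fun g => le_of_eq <| by
    calc ‖hN.extension g‖ = ‖hN.restrictionEquiv.symm g‖ := rfl
      _ = 1 * ‖g‖ := by rw [LinearIsometryEquiv.norm_map, one_mul]

theorem isLprojection_extension_comp :
    IsLprojection (StrongDual ℝ X) (hN.extension ∘L ι.toContinuousLinearMap.dualMap_s14) := by
  refine ⟨?_, fun f => ?_⟩
  · ext f x
    simp [extension_comp]
  set e := hN.extension (f.comp ι.toContinuousLinearMap)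
  have hp : f - e ∈ annihilator' (LinearMap.range ι.toLinearMap) := by
    rintro - ⟨z, rfl⟩
    have := congrArg (· z) (hN.extension_comp (f.comp ι.toContinuousLinearMap))
    simpa [sub_eq_zero] using this.symm
  simp only [ContinuousLinearMap.smul_def, sub_apply, one_apply_eq_self,
    comp_apply, dualMap_apply_s14]
  rw [add_comm, ← hN.2.2.2.2 _ hp _ (hN.extension_mem _), sub_add_cancel]

theorem uniqueNormPreservingExtension :
    UniqueNormPreservingExtension ι.toContinuousLinearMap :=
  .of_isLprojection ι.norm_toContinuousLinearMap_le hN.norm_extension_le hN.extension_comp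
    hN.isLprojection_extension_comp

theorem uniqueNormPreservingExtension_bidual :
    UniqueNormPreservingExtension ι.toContinuousLinearMap.dualMap_s14.dualMap_s14 :=
  .dualMap_of_isLprojection ((norm_dualMap_le_s14 _).trans ι.norm_toContinuousLinearMap_le)
    hN.norm_extension_le hN.extension_comp hN.isLprojection_extension_comp

end LSumDecomp

end MIdeal

theorem frechet_smooth_of_very_smooth_in_M_ideal_general
    {X : Type*} [NormedAddCommGroup X] [NormedSpace ℝ X]
    (hX : ∀ x : X, VerySmoothPoint X x → FrechetSmoothPoint X x)
    (J : Submodule ℝ X) (hJ : IsMIdeal J)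
    (j : J) (hj : VerySmoothPoint J j) :
    FrechetSmoothPoint J j := by
  obtain ⟨-, N, hN⟩ := hJ
  rw [← J.range_subtype] at hN
  have hι : ‖J.subtypeₗᵢ.toContinuousLinearMap‖ ≤ 1 := J.subtypeₗᵢ.norm_toContinuousLinearMap_le
  have hj₁ : SmoothPoint X j :=
    hj.1.map_s14 hι (hN.uniqueNormPreservingExtension (ι := J.subtypeₗᵢ))
  have hj₂ : SmoothPoint _ (inclusionInDoubleDual ℝ X j) :=
    hj.2.map_s14 ((norm_dualMap_le_s14 _).trans ((norm_dualMap_le_s14 _).trans hι))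
      (hN.uniqueNormPreservingExtension_bidual (ι := J.subtypeₗᵢ))
  exact (hX j ⟨hj₁, hj₂⟩).of_linearIsometry J.subtypeₗᵢ

theorem frechet_smooth_of_very_smooth_in_M_ideal
    {X : Type*} [NormedAddCommGroup X] [NormedSpace ℝ X] [CompleteSpace X]
    (hX : ∀ x : X, VerySmoothPoint X x → FrechetSmoothPoint X x)
    (J : Submodule ℝ X) (hJ : IsMIdeal J)
    (j : J) (hj : VerySmoothPoint J j) :
    FrechetSmoothPoint J j :=
  frechet_smooth_of_very_smooth_in_M_ideal_general hX J hJ j hj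
end
end
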